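/- arXiv:2301.13650 — 7 statements merged into one kernel-verified Lean document; each statement's English description precedes it below -/
import Mathlib

section
/- Let k ≥ 0 and 1 ≤ r ≤ e. Then there is an isomorphism of abelian groups o_L/π^{ek+r}o_L ≅ (ℤ/p^kℤ)^{f(e−r)} × (ℤ/p^{k+1}ℤ)^{fr}. -/
/-!
Over the discrete valuation ring `ℤ_p`, Smith normal form writes `O/π^N` (with `N = ek + r`) as
`∏_{i < ef} ℤ_p/p^{c_i}`. Since `p ~ π^e`, the `p^j`-torsion of `O/π^N` is its `π^{ej}`-torsion,
which is isomorphic to `O/π^{min(N, ej)}` and so has `p^{f·min(N, ej)}` elements; in the product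
it has `p^{Σ min(c_i, j)}` elements. For `j = k` this forces every `c_i ≥ k`, comparing `j = k + 1`
with `j = k + 2` forces every `c_i ≤ k + 1`, and then `Σ c_i = fN` shows that exactly `fr` of the
`c_i` equal `k + 1`.
-/

open Finset Submodule

section QuotientSpanPow

variable {R : Type*} [CommRing R] [IsDomain R] {t : R}

theorem card_torsionBy_quotient_span_pow (ht : t ≠ 0) (n w : ℕ) :
    Nat.card (torsionBy R (R ⧸ Ideal.span {t ^ n}) (t ^ w)) =
      Nat.card (R ⧸ Ideal.span {t ^ min n w}) := by
  set m := n - min n w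
  have hn : t ^ n = t ^ m * t ^ min n w := by rw [← pow_add]; congr 1; omega
  let φ := (Ideal.span {t ^ n}).mkQ ∘ₗ LinearMap.mulLeft R (t ^ m)
  have hker : LinearMap.ker φ = Ideal.span {t ^ min n w} := by
    ext x
    simp only [φ, LinearMap.mem_ker, LinearMap.coe_comp, Function.comp_apply,
      LinearMap.mulLeft_apply, mkQ_apply, Quotient.mk_eq_zero,
      Ideal.mem_span_singleton]
    rw [hn, mul_dvd_mul_iff_left (pow_ne_zero _ ht)]
  have hrange : LinearMap.range φ = torsionBy R _ (t ^ w) := by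
    ext y
    induction y using Quotient.induction_on with | _ z => ?_
    simp only [φ, LinearMap.mem_range, LinearMap.coe_comp, Function.comp_apply,
      LinearMap.mulLeft_apply, mkQ_apply, mem_torsionBy_iff,
      ← Quotient.mk_smul, smul_eq_mul, Quotient.mk_eq_zero,
      Submodule.Quotient.eq]
    constructor
    · rintro ⟨y, hy⟩
      have hdiv : t ^ n ∣ t ^ w * t ^ m := by rw [← pow_add]; exact pow_dvd_pow t (by omega)
      rw [show t ^ w * z = t ^ w * t ^ m * y - t ^ w * (t ^ m * y - z) by ring]
      exact sub_mem (Ideal.mul_mem_right _ _ (Ideal.mem_span_singleton.2 hdiv))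
        (Ideal.mul_mem_left _ _ hy)
    · intro h
      rcases le_total n w with hnw | hwn
      · exact ⟨z, by simp [m, min_eq_left hnw]⟩
      · rw [Ideal.mem_span_singleton, hn, min_eq_right hwn, mul_comm,
          mul_dvd_mul_iff_left (pow_ne_zero _ ht)] at h
        obtain ⟨y, rfl⟩ := h
        exact ⟨y, by simp⟩
  calc Nat.card (torsionBy R (R ⧸ Ideal.span {t ^ n}) (t ^ w))
      = Nat.card (LinearMap.range φ) := by rw [hrange]
    _ = Nat.card (R ⧸ LinearMap.ker φ) := Nat.card_congr φ.quotKerEquivRange.toEquiv.symm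
    _ = Nat.card (R ⧸ Ideal.span {t ^ min n w}) := by rw [hker]

theorem card_quotient_span_pow_add (ht : t ≠ 0) (a b : ℕ) :
    Nat.card (R ⧸ Ideal.span {t ^ (a + b)}) =
      Nat.card (R ⧸ Ideal.span {t ^ a}) * Nat.card (R ⧸ Ideal.span {t ^ b}) := by
  have hle : Ideal.span {t ^ (a + b)} ≤ Ideal.span {t ^ a} :=
    Ideal.span_singleton_le_span_singleton.2 (pow_dvd_pow t (Nat.le_add_right a b))
  have hker : LinearMap.ker (factor hle) = torsionBy R _ (t ^ b) := by
    ext y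
    induction y using Quotient.induction_on with | _ z => ?_
    rw [LinearMap.mem_ker, mem_torsionBy_iff, ← mkQ_apply, factor_mk, mkQ_apply, mkQ_apply,
      ← Quotient.mk_smul, Quotient.mk_eq_zero, Quotient.mk_eq_zero, smul_eq_mul,
      Ideal.mem_span_singleton, Ideal.mem_span_singleton, pow_add, mul_comm (t ^ a),
      mul_dvd_mul_iff_left (pow_ne_zero _ ht)]
  rw [card_eq_card_quotient_mul_card (torsionBy R _ (t ^ b)), ← hker,
    Nat.card_congr ((factor hle).quotKerEquivOfSurjective (factor_surjective hle)).toEquiv, hker,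
    card_torsionBy_quotient_span_pow ht, min_eq_right (Nat.le_add_left b a), mul_comm]

theorem card_quotient_span_pow (ht : t ≠ 0) (m : ℕ) :
    Nat.card (R ⧸ Ideal.span {t ^ m}) = Nat.card (R ⧸ Ideal.span {t}) ^ m := by
  induction m with
  | zero => simp
  | succ m ih => rw [card_quotient_span_pow_add ht, ih, pow_one, pow_succ]

end QuotientSpanPow

section Torsion

variable {R : Type*} [CommRing R]

theorem card_torsionBy_congr {M N : Type*} [AddCommGroup M] [Module R M] [AddCommGroup N]
    [Module R N] (e : M ≃ₗ[R] N) (a : R) :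
    Nat.card (torsionBy R M a) = Nat.card (torsionBy R N a) :=
  Nat.card_congr <| e.toEquiv.subtypeEquiv fun x => by
    simp only [mem_torsionBy_iff, LinearEquiv.coe_toEquiv, ← map_smul,
      LinearEquiv.map_eq_zero_iff]

theorem card_torsionBy_pi {ι : Type*} [Fintype ι] (M : ι → Type*) [∀ i, AddCommGroup (M i)]
    [∀ i, Module R (M i)] (a : R) :
    Nat.card (torsionBy R (∀ i, M i) a) = ∏ i, Nat.card (torsionBy R (M i) a) := by
  rw [← Nat.card_pi]
  refine Nat.card_congr ((Equiv.subtypeEquivRight fun x => ?_).trans Equiv.subtypePiEquivPi)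
  simp [mem_torsionBy_iff, funext_iff]

theorem restrictScalars_torsionBy_of_associated {S M : Type*} [CommRing S] [Algebra R S]
    [AddCommGroup M] [Module R M] [Module S M] [IsScalarTower R S M] {a : R} {b : S}
    (h : Associated (algebraMap R S a) b) :
    (torsionBy S M b).restrictScalars R = torsionBy R M a := by
  obtain ⟨u, rfl⟩ := h
  ext x
  rw [restrictScalars_mem, mem_torsionBy_iff, mem_torsionBy_iff, mul_comm, mul_smul,
    algebraMap_smul, ← Units.smul_def, smul_eq_zero_iff_eq]

end Torsion

noncomputable def PadicInt.quotientSpanPowEquivZMod (p : ℕ) [Fact p.Prime] (n : ℕ) :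
    ℤ_[p] ⧸ Ideal.span {(p : ℤ_[p]) ^ n} ≃+* ZMod (p ^ n) := by
  refine (Ideal.quotEquivOfEq (PadicInt.ker_toZModPow n).symm).trans
    (RingHom.quotientKerEquivOfSurjective fun x => ?_)
  have : NeZero (p ^ n) := ⟨pow_ne_zero _ (Nat.Prime.ne_zero Fact.out)⟩
  obtain ⟨a, rfl⟩ := ZMod.natCast_zmod_surjective x
  exact ⟨a, map_natCast _ a⟩

theorem PadicInt.card_quotient_span_p (p : ℕ) [Fact p.Prime] :
    Nat.card (ℤ_[p] ⧸ Ideal.span {(p : ℤ_[p])}) = p := by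
  simpa using Nat.card_congr (PadicInt.quotientSpanPowEquivZMod p 1).toEquiv

theorem exists_linearEquiv_pi_quotient_span_pow {A S : Type*} [CommRing A] [IsDomain A]
    [IsDiscreteValuationRing A] [CommRing S] [IsDomain S] [Algebra A S] [Module.Finite A S]
    [Module.Free A S] {ϖ : A} (hϖ : Irreducible ϖ) (I : Ideal S) (hI : I ≠ ⊥) :
    ∃ c : Fin (Module.finrank A S) → ℕ,
      Nonempty ((S ⧸ I) ≃ₗ[A] ∀ i, A ⧸ Ideal.span {ϖ ^ c i}) := by
  let b := Module.finBasis A S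
  choose c hc using fun i => IsDiscreteValuationRing.associated_pow_irreducible
    (I.smithCoeffs_ne_zero b hI i) hϖ
  exact ⟨c, ⟨(I.quotientEquivPiSpan b hI).trans <| LinearEquiv.piCongrRight fun i =>
    Submodule.quotEquivOfEq _ _ (Ideal.span_singleton_eq_span_singleton.2 (hc i))⟩⟩

theorem card_quotient_pow_min_eq_pow_sum_min {A S : Type*} [CommRing A] [IsDomain A]
    [CommRing S] [IsDomain S] [Algebra A S] {ϖ : A} (hϖ : ϖ ≠ 0) {π : S} (hπ : π ≠ 0) {e : ℕ}
    (he : Associated (algebraMap A S ϖ) (π ^ e)) {N : ℕ} {ι : Type*} [Fintype ι] {c : ι → ℕ}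
    (Φ : (S ⧸ Ideal.span {π ^ N}) ≃ₗ[A] ∀ i, A ⧸ Ideal.span {ϖ ^ c i}) (j : ℕ) :
    Nat.card (S ⧸ Ideal.span {π}) ^ min N (e * j) =
      Nat.card (A ⧸ Ideal.span {ϖ}) ^ ∑ i, min (c i) j := by
  have hj : Associated (algebraMap A S (ϖ ^ j)) (π ^ (e * j)) := by
    rw [map_pow, pow_mul]
    exact he.pow_pow
  calc Nat.card (S ⧸ Ideal.span {π}) ^ min N (e * j)
      = Nat.card (torsionBy S (S ⧸ Ideal.span {π ^ N}) (π ^ (e * j))) := by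
        rw [card_torsionBy_quotient_span_pow hπ, card_quotient_span_pow hπ]
    _ = Nat.card (torsionBy A (S ⧸ Ideal.span {π ^ N}) (ϖ ^ j)) := by
        rw [← restrictScalars_torsionBy_of_associated hj]
        rfl
    _ = ∏ i, Nat.card (torsionBy A (A ⧸ Ideal.span {ϖ ^ c i}) (ϖ ^ j)) := by
        rw [card_torsionBy_congr Φ, card_torsionBy_pi]
    _ = Nat.card (A ⧸ Ideal.span {ϖ}) ^ ∑ i, min (c i) j := by
        simp only [card_torsionBy_quotient_span_pow hϖ, card_quotient_span_pow hϖ,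
          prod_pow_eq_pow_sum]

section TwoValued

variable {ι : Type*} [Fintype ι] {c : ι → ℕ}

theorem le_of_sum_min_eq_card_mul {k : ℕ} (h : ∑ i, min (c i) k = Fintype.card ι * k)
    (i : ι) : k ≤ c i := by
  have := (sum_eq_sum_iff_of_le fun i _ => min_le_right (c i) k).1 (by simpa using h) i
    (mem_univ i)
  omega

theorem le_of_sum_min_eq_sum_min_succ {m : ℕ}
    (h : ∑ i, min (c i) m = ∑ i, min (c i) (m + 1)) (i : ι) : c i ≤ m := by
  have := (sum_eq_sum_iff_of_le fun i _ => min_le_min_left (c i) m.le_succ).1 h i (mem_univ i)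
  omega

theorem sum_eq_card_mul_add_card_filter {k : ℕ} (hc : ∀ i, k ≤ c i ∧ c i ≤ k + 1) :
    ∑ i, c i = Fintype.card ι * k + #{i | c i = k + 1} := by
  calc ∑ i, c i = ∑ i, (k + if c i = k + 1 then 1 else 0) :=
        sum_congr rfl fun i _ => by have := hc i; split_ifs <;> omega
    _ = Fintype.card ι * k + #{i | c i = k + 1} := by
        simp [sum_add_distrib, sum_boole]

theorem nonempty_pi_addEquiv_prod_of_two_values (M : ℕ → Type*) [∀ n, AddCommMonoid (M n)]
    {k a b : ℕ} (hc : ∀ i, k ≤ c i ∧ c i ≤ k + 1) (hb : #{i | c i = k + 1} = b)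
    (hab : Fintype.card ι = a + b) :
    Nonempty ((∀ i, M (c i)) ≃+ (Fin a → M k) × (Fin b → M (k + 1))) := by
  let P : ι → Prop := fun i => c i = k + 1
  have hP : Fintype.card {i // P i} = b := by rw [Fintype.card_subtype]; exact hb
  have hnP : Fintype.card {i // ¬P i} = a := by rw [Fintype.card_subtype_compl, hP]; omega
  let split : (∀ i, M (c i)) ≃+ (∀ i : {i // P i}, M (c i)) × (∀ i : {i // ¬P i}, M (c i)) :=
    { Equiv.piEquivPiSubtypeProd P _ with map_add' := fun _ _ => rfl }
  let eP : (∀ i : {i // P i}, M (c i)) ≃+ (Fin b → M (k + 1)) :=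
    (AddEquiv.piCongrRight fun i => AddEquiv.cast i.2).trans
      (AddEquiv.arrowCongr (Fintype.equivFinOfCardEq hP) (AddEquiv.refl _))
  let enP : (∀ i : {i // ¬P i}, M (c i)) ≃+ (Fin a → M k) :=
    (AddEquiv.piCongrRight fun i : {i // ¬P i} => AddEquiv.cast (M := M) (show c i = k by
      have : ¬c i = k + 1 := i.2; have := hc i; omega)).trans
      (AddEquiv.arrowCongr (Fintype.equivFinOfCardEq hnP) (AddEquiv.refl _))
  exact ⟨split.trans (AddEquiv.prodComm.trans (AddEquiv.prodCongr enP eP))⟩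

end TwoValued

theorem stmt0_general (p : ℕ) [Fact p.Prime] (O : Type*) [CommRing O] [IsDomain O]
    [Algebra ℤ_[p] O] [Module.Finite ℤ_[p] O] [Module.Free ℤ_[p] O]
    (e f : ℕ) (hrank : Module.finrank ℤ_[p] O = e * f)
    (π : O) (hπ : Irreducible π)
    (he : Associated ((p : O)) (π ^ e))
    (hf : Nat.card (O ⧸ Ideal.span {π}) = p ^ f)
    (k r : ℕ) (hre : r ≤ e) :
    Nonempty ((O ⧸ Ideal.span {π ^ (e * k + r)}) ≃+
      ((Fin (f * (e - r)) → ZMod (p ^ k)) × (Fin (f * r) → ZMod (p ^ (k + 1))))) := by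
  set N := e * k + r with hN
  have hp := PadicInt.irreducible_p (p := p)
  obtain ⟨c, ⟨Φ⟩⟩ := exists_linearEquiv_pi_quotient_span_pow hp (Ideal.span {π ^ N})
    (by simpa using pow_ne_zero N hπ.ne_zero)
  have key (j : ℕ) : f * min N (e * j) = ∑ i, min (c i) j := by
    refine Nat.pow_right_injective (Fact.out : p.Prime).two_le ?_
    simpa [hf, PadicInt.card_quotient_span_p, ← pow_mul] using
      card_quotient_pow_min_eq_pow_sum_min hp.ne_zero hπ.ne_zero (by rwa [map_natCast]) Φ j
  have hcard : Fintype.card (Fin (Module.finrank ℤ_[p] O)) = e * f := by simp [hrank]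
  have hk := key k
  have hk1 := key (k + 1)
  have hk2 := key (k + 2)
  rw [min_eq_right (by omega)] at hk
  rw [min_eq_left (by rw [mul_add]; omega)] at hk1 hk2
  have hup : ∀ i, c i ≤ k + 1 := le_of_sum_min_eq_sum_min_succ (by rw [← hk1, ← hk2])
  have hc (i) : k ≤ c i ∧ c i ≤ k + 1 :=
    ⟨le_of_sum_min_eq_card_mul (by rw [← hk, hcard]; ring) i, hup i⟩
  have hsum : ∑ i, c i = f * N := hk1 ▸ sum_congr rfl fun i _ => (min_eq_left (hup i)).symm
  have htop : #{i | c i = k + 1} = f * r := by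
    have := sum_eq_card_mul_add_card_filter hc
    rw [hsum, hcard, hN] at this
    linarith
  obtain ⟨ψ⟩ := nonempty_pi_addEquiv_prod_of_two_values (fun n => ZMod (p ^ n)) hc htop
    (a := f * (e - r)) (by rw [hcard, ← mul_add, Nat.sub_add_cancel hre, mul_comm])
  exact ⟨Φ.toAddEquiv.trans <| (AddEquiv.piCongrRight fun i =>
    (PadicInt.quotientSpanPowEquivZMod p (c i)).toAddEquiv).trans ψ⟩

/-- Let `p` be prime and let `O` be the ring of integers of a finite extension of `ℚ_p`:
a discrete valuation ring which is a finite free `ℤ_p`-module of rank `e·f`, with uniformizer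
`π`, ramification index `e` (so `p` is associated to `π^e`) and inertia degree `f` (so the
residue field `O/π` has `p^f` elements).  For `k ≥ 0` and `1 ≤ r ≤ e` there is an isomorphism
of abelian groups `O/π^{ek+r}O ≅ (ℤ/p^kℤ)^{f(e−r)} × (ℤ/p^{k+1}ℤ)^{fr}`. -/
theorem stmt0 (p : ℕ) [Fact p.Prime] (O : Type*) [CommRing O] [IsDomain O]
    [IsDiscreteValuationRing O] [Algebra ℤ_[p] O] [Module.Finite ℤ_[p] O] [Module.Free ℤ_[p] O]
    (e f : ℕ) (hrank : Module.finrank ℤ_[p] O = e * f)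
    (π : O) (hπ : Irreducible π)
    (he : Associated ((p : O)) (π ^ e))
    (hf : Nat.card (O ⧸ Ideal.span {π}) = p ^ f)
    (k r : ℕ) (hr1 : 1 ≤ r) (hre : r ≤ e) :
    Nonempty ((O ⧸ Ideal.span {π ^ (e * k + r)}) ≃+
      ((Fin (f * (e - r)) → ZMod (p ^ k)) × (Fin (f * r) → ZMod (p ^ (k + 1))))) :=
  stmt0_general p O e f hrank π hπ he hf k r hre
end

section
/- Fix m ∈ {0,1,…,q−2} and let n = m + j(q−1) for some j ≥ 0. Write P_n(s) = Σ_{k=0}^n b_k^{(n)} s^k with b_k^{(n)} ∈ L. Then: (1) b_k^{(n)} = 0 whenever k is not congruent to n modulo (q−1); and (2) for each 0 ≤ i ≤ j, the coefficient of s^{⟨i⟩} in P_{⟨j⟩}(s) equals r^{(m)}_{i,j}/(⟨i⟩)!. -/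
/-!
For `q ≥ 2` the series `log_LT` is supported on the exponents `q^ℓ ≡ 1 [MOD q - 1]`, so `log_LT^k`
is supported on exponents `≡ k`, which gives (1). For (2), only the terms with `ℓ ≤ N` of `log_LT`
contribute to the coefficient of `Z^N` in `log_LT^K`, and the multinomial theorem writes that
coefficient as a sum over `(k_ℓ)` with `Σ k_ℓ = K` and `Σ k_ℓ q^ℓ = N`. Since
`q^ℓ = 1 + (q - 1)(1 + q + ⋯ + q^(ℓ-1))`, the second condition becomes the one defining
`Q_m(i,j)`. Finally `q ≥ 2` holds because `o_L / π` is a nontrivial ring which is finite, `o_L`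
being a finite `ℤ_p`-module.
-/

open Polynomial PowerSeries Finset

/-- The Lubin–Tate logarithm `log_LT(Z) = Σ_{k≥0} π^{-k} Z^{q^k}` (for `q ≥ 2` the inner sum has
at most one nonzero term, since `q^k = n` forces `k ≤ n`). -/
noncomputable def logLT {L : Type*} [Field L] (q : ℕ) (π : L) : PowerSeries L :=
  PowerSeries.mk fun n => ∑ k ∈ Finset.range (n + 1), if n = q ^ k then (π ^ k)⁻¹ else 0

/-- The polynomial `P_n(Y) = Σ_{k=0}^n d_n^{(k)} Y^k / k!`, where `d_n^{(k)}` is the coefficient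
of `Z^n` in `log_LT(Z)^k`; equivalently `exp(Y·log_LT(Z)) = Σ_{n≥0} P_n(Y) Z^n`. -/
noncomputable def LTpoly {L : Type*} [Field L] (q : ℕ) (π : L) (n : ℕ) : Polynomial L :=
  ∑ k ∈ Finset.range (n + 1),
    Polynomial.C (PowerSeries.coeff n (logLT q π ^ k) / (k.factorial : L)) * Polynomial.X ^ k

/-- `r^{(m)}_{i,j} := Σ_{k ∈ Q_m(i,j)} (m+i(q−1))!/(∏_ℓ k_ℓ!) · π^{−Σ_{ℓ≥1} ℓ·k_ℓ}`, where
`Q_m(i,j)` is the set of finitely supported sequences `(k_ℓ)_{ℓ≥0}` of naturals with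
`Σ_ℓ k_ℓ = m + i(q−1)` and `Σ_{ℓ≥1} k_ℓ·(q^ℓ−1)/(q−1) = j−i` (here
`(q^ℓ−1)/(q−1) = Σ_{t<ℓ} q^t`). -/
noncomputable def rcoef {L : Type*} [Field L] (q : ℕ) (π : L) (m i j : ℕ) : L :=
  ∑ᶠ (k : ℕ →₀ ℕ) (_ : (∑ ℓ ∈ k.support, k ℓ) = m + i * (q - 1) ∧
      (∑ ℓ ∈ k.support, k ℓ * ∑ t ∈ Finset.range ℓ, q ^ t) = j - i),
    ((m + i * (q - 1)).factorial : L) /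
      ((∏ ℓ ∈ k.support, ((k ℓ).factorial : L)) * π ^ (∑ ℓ ∈ k.support, ℓ * k ℓ))

instance PadicInt.hasFiniteQuotients (p : ℕ) [Fact p.Prime] : Ring.HasFiniteQuotients ℤ_[p] where
  finiteQuotient {I} hI := by
    obtain ⟨n, rfl⟩ := PadicInt.ideal_eq_span_pow_p hI
    have : NeZero (p ^ n) := ⟨pow_ne_zero n (Fact.out : p.Prime).ne_zero⟩
    rw [← PadicInt.ker_toZModPow]
    exact .of_equiv _ (RingHom.quotientKerEquivOfSurjective (ZMod.ringHom_surjective _)).symm.toEquiv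

theorem Irreducible.one_lt_card_quotient_span {S : Type*} [CommRing S] [Ring.HasFiniteQuotients S]
    {x : S} (hx : Irreducible x) : 1 < Nat.card (S ⧸ Ideal.span {x}) := by
  have : Finite (S ⧸ Ideal.span {x}) :=
    Ring.HasFiniteQuotients.finiteQuotient (by simpa using hx.ne_zero)
  have : Nontrivial (S ⧸ Ideal.span {x}) := by
    rw [Ideal.Quotient.nontrivial_iff, Ne, Ideal.span_singleton_eq_top]
    exact hx.not_isUnit
  exact Finite.one_lt_card

theorem Ring.HasFiniteQuotients.integralClosure (A K L : Type*) [CommRing A] [IsDomain A]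
    [IsIntegrallyClosed A] [Ring.HasFiniteQuotients A] [Field K] [Algebra A K]
    [IsFractionRing A K] [Field L] [Algebra K L] [Algebra A L] [IsScalarTower A K L]
    [FiniteDimensional K L] [Algebra.IsSeparable K L] :
    Ring.HasFiniteQuotients (_root_.integralClosure A L) :=
  have := IsIntegralClosure.finite A K L (_root_.integralClosure A L)
  .of_module_finite A _

namespace Finset

theorem sum_finsuppAntidiag_comp_coe {ι M : Type*} [DecidableEq ι] [AddCommMonoid M]
    (s : Finset ι) (n : ℕ) (g : (ι → ℕ) → M) :
    ∑ k ∈ finsuppAntidiag s n, g k = ∑ k ∈ piAntidiag s n, g k := by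
  rw [finsuppAntidiag, sum_map]
  exact sum_attach (piAntidiag s n) g

end Finset

namespace PowerSeries

variable {R : Type*}

theorem coeff_pow_eq_zero_of_not_modEq [Semiring R] {f : R⟦X⟧} {r a : ℕ}
    (hf : ∀ d, ¬ d ≡ a [MOD r] → coeff d f = 0) (K : ℕ) {n : ℕ} (hn : ¬ n ≡ K * a [MOD r]) :
    coeff n (f ^ K) = 0 := by
  induction K generalizing n with
  | zero =>
    rw [pow_zero, coeff_one, if_neg]
    rintro rfl
    exact hn (by simp [Nat.ModEq])
  | succ K ih =>
    rw [pow_succ, coeff_mul]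
    refine sum_eq_zero fun ⟨b, d⟩ hbd => ?_
    rw [HasAntidiagonal.mem_antidiagonal] at hbd
    by_cases hb : b ≡ K * a [MOD r]
    · have hd : ¬ d ≡ a [MOD r] := fun hd => hn (by rw [← hbd, add_mul, one_mul]; exact hb.add hd)
      rw [hf d hd, mul_zero]
    · rw [ih hb, zero_mul]

theorem coeff_pow_eq_of_trunc_eq [CommSemiring R] {f g : R⟦X⟧} {N : ℕ}
    (h : trunc (N + 1) f = trunc (N + 1) g) (K : ℕ) : coeff N (f ^ K) = coeff N (g ^ K) := by
  have key : trunc (N + 1) (f ^ K) = trunc (N + 1) (g ^ K) := by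
    rw [← trunc_trunc_pow, h, trunc_trunc_pow]
  simpa [coeff_trunc] using congrArg (Polynomial.coeff · N) key

theorem coeff_sum_monomial_pow [CommSemiring R] {ι : Type*} [DecidableEq ι] (s : Finset ι)
    (e : ι → ℕ) (c : ι → R) (K N : ℕ) :
    coeff N ((∑ i ∈ s, monomial (e i) (c i)) ^ K) =
      ∑ k ∈ finsuppAntidiag s K with k.sum (fun i n => n * e i) = N,
        (k.multinomial : R) * k.prod (fun i n => c i ^ n) := by
  rw [sum_pow_eq_sum_piAntidiag, ← sum_finsuppAntidiag_comp_coe, map_sum, sum_filter]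
  refine sum_congr rfl fun k hk => ?_
  have hks := (mem_finsuppAntidiag.1 hk).2
  rw [Finsupp.sum_of_support_subset k hks (fun i n => n * e i) (by simp),
    Finsupp.prod_of_support_subset k hks (fun i n => c i ^ n) (by simp)]
  simp only [monomial_pow, prod_monomial, ← map_natCast (C (R := R)), coeff_C_mul, coeff_monomial,
    Finsupp.multinomial_of_support_subset hks, eq_comm (a := N), mul_ite, mul_zero]

end PowerSeries

theorem Finsupp.support_subset_range_of_sum_mul_pow_eq {q : ℕ} (hq : 1 < q) {k : ℕ →₀ ℕ} {N : ℕ}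
    (h : k.sum (fun ℓ n => n * q ^ ℓ) = N) : k.support ⊆ range (N + 1) := by
  intro ℓ hℓ
  rw [mem_range, Nat.lt_succ_iff, ← h]
  calc ℓ ≤ q ^ ℓ := (Nat.lt_pow_self hq).le
    _ ≤ k ℓ * q ^ ℓ := Nat.le_mul_of_pos_left _ (Nat.pos_of_ne_zero (Finsupp.mem_support_iff.1 hℓ))
    _ ≤ k.sum (fun ℓ n => n * q ^ ℓ) :=
      Finset.single_le_sum (f := fun ℓ => k ℓ * q ^ ℓ) (fun _ _ => Nat.zero_le _) hℓ

theorem Finsupp.sum_mul_pow_eq {q : ℕ} (hq : 1 ≤ q) (k : ℕ →₀ ℕ) :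
    k.sum (fun ℓ n => n * q ^ ℓ) =
      k.sum (fun _ n => n) + (q - 1) * k.sum (fun ℓ n => n * ∑ t ∈ range ℓ, q ^ t) := by
  rw [Finsupp.mul_sum, ← Finsupp.sum_add]
  refine Finsupp.sum_congr fun ℓ _ => ?_
  have := geom_sum_mul_add (q - 1) ℓ
  rw [Nat.sub_add_cancel hq] at this
  rw [← this]
  ring

theorem Finsupp.multinomial_mul_prod_inv_pow {L : Type*} [Field L] [CharZero L] (π : L)
    (k : ℕ →₀ ℕ) :
    (k.multinomial : L) * k.prod (fun ℓ n => ((π ^ ℓ)⁻¹) ^ n) =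
      ((∑ ℓ ∈ k.support, k ℓ).factorial : L) /
        ((∏ ℓ ∈ k.support, ((k ℓ).factorial : L)) * π ^ (∑ ℓ ∈ k.support, ℓ * k ℓ)) := by
  have hspec : (∏ ℓ ∈ k.support, ((k ℓ).factorial : L)) * k.multinomial =
      (∑ ℓ ∈ k.support, k ℓ).factorial := by
    exact_mod_cast Nat.multinomial_spec k.support k
  have hprod : k.prod (fun ℓ n => ((π ^ ℓ)⁻¹) ^ n) = (π ^ (∑ ℓ ∈ k.support, ℓ * k ℓ))⁻¹ := by
    simp only [Finsupp.prod, ← inv_pow, ← pow_mul, prod_pow_eq_pow_sum]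
  have hne : (∏ ℓ ∈ k.support, ((k ℓ).factorial : L)) ≠ 0 :=
    Finset.prod_ne_zero_iff.2 fun ℓ _ => Nat.cast_ne_zero.2 (Nat.factorial_ne_zero _)
  rw [hprod, ← hspec, mul_div_mul_left _ _ hne, div_eq_mul_inv]

section LubinTate

variable {L : Type*} [Field L]

theorem coeff_logLT_eq_zero_of_not_modEq {q : ℕ} (hq : 1 ≤ q) (π : L) {d : ℕ}
    (hd : ¬ d ≡ 1 [MOD q - 1]) : coeff d (logLT q π) = 0 := by
  rw [logLT, coeff_mk]
  refine sum_eq_zero fun ℓ _ => if_neg ?_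
  rintro rfl
  exact hd (by simpa using (Nat.modEq_sub hq).pow ℓ)

theorem trunc_logLT {q : ℕ} (hq : 1 < q) (π : L) (M : ℕ) :
    trunc M (logLT q π) = trunc M (∑ ℓ ∈ range M, monomial (q ^ ℓ) (π ^ ℓ)⁻¹) := by
  ext d
  rw [coeff_trunc, coeff_trunc]
  simp only [logLT, coeff_mk, map_sum, PowerSeries.coeff_monomial]
  split_ifs with hd
  · refine sum_subset (range_subset_range.2 (by omega)) fun ℓ _ hℓ => if_neg ?_
    have := Nat.lt_pow_self hq (n := ℓ)
    simp only [mem_range] at hℓ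
    omega
  · rfl

theorem coeff_logLT_pow {q : ℕ} (hq : 1 < q) (π : L) (K N : ℕ) :
    coeff N (logLT q π ^ K) =
      ∑ k ∈ finsuppAntidiag (range (N + 1)) K with k.sum (fun ℓ n => n * q ^ ℓ) = N,
        (k.multinomial : L) * k.prod (fun ℓ n => ((π ^ ℓ)⁻¹) ^ n) := by
  rw [coeff_pow_eq_of_trunc_eq (trunc_logLT hq π (N + 1)), coeff_sum_monomial_pow]

theorem rcoef_index_condition_iff {q : ℕ} (hq : 2 ≤ q) {m i j : ℕ} (hij : i ≤ j) (k : ℕ →₀ ℕ) :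
    ((∑ ℓ ∈ k.support, k ℓ) = m + i * (q - 1) ∧
        (∑ ℓ ∈ k.support, k ℓ * ∑ t ∈ range ℓ, q ^ t) = j - i) ↔
      k ∈ {k ∈ finsuppAntidiag (range (m + j * (q - 1) + 1)) (m + i * (q - 1)) |
        k.sum (fun ℓ n => n * q ^ ℓ) = m + j * (q - 1)} := by
  have hj : j * (q - 1) = i * (q - 1) + (q - 1) * (j - i) := by
    rw [mul_comm (q - 1), ← add_mul, Nat.add_sub_cancel' hij]
  rw [mem_filter, mem_finsuppAntidiag', Finsupp.sum_mul_pow_eq (by omega)]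
  simp only [Finsupp.sum]
  constructor
  · rintro ⟨hK, hJ⟩
    have hN : (∑ ℓ ∈ k.support, k ℓ) + (q - 1) * (∑ ℓ ∈ k.support, k ℓ * ∑ t ∈ range ℓ, q ^ t) =
        m + j * (q - 1) := by
      rw [hK, hJ, hj, add_assoc]
    refine ⟨⟨hK, Finsupp.support_subset_range_of_sum_mul_pow_eq (by omega : 1 < q) ?_⟩, hN⟩
    rw [Finsupp.sum_mul_pow_eq (by omega)]
    exact hN
  · rintro ⟨⟨hK, -⟩, hN⟩
    refine ⟨hK, Nat.eq_of_mul_eq_mul_left (show 0 < q - 1 by omega) ?_⟩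
    omega

theorem rcoef_eq_sum [CharZero L] {q : ℕ} (hq : 2 ≤ q) (π : L) (m : ℕ) {i j : ℕ} (hij : i ≤ j) :
    rcoef q π m i j =
      ∑ k ∈ finsuppAntidiag (range (m + j * (q - 1) + 1)) (m + i * (q - 1)) with
          k.sum (fun ℓ n => n * q ^ ℓ) = m + j * (q - 1),
        (k.multinomial : L) * k.prod (fun ℓ n => ((π ^ ℓ)⁻¹) ^ n) := by
  rw [rcoef, ← finsum_mem_coe_finset]
  refine finsum_congr fun k => finsum_congr_Prop (propext (rcoef_index_condition_iff hq hij k)) ?_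
  intro hk
  rw [Finsupp.multinomial_mul_prod_inv_pow, ((rcoef_index_condition_iff hq hij k).2 hk).1]

theorem coeff_LTpoly (q : ℕ) (π : L) (n k : ℕ) :
    (LTpoly q π n).coeff k =
      if k ≤ n then coeff n (logLT q π ^ k) / (k.factorial : L) else 0 := by
  simp [LTpoly]

end LubinTate

theorem stmt4_general (p : ℕ) [Fact p.Prime] (L : Type*) [Field L]
    [Algebra ℚ_[p] L] [FiniteDimensional ℚ_[p] L]
    [Algebra ℤ_[p] L] [IsScalarTower ℤ_[p] ℚ_[p] L]
    (π : L) (hπmem : π ∈ integralClosure ℤ_[p] L)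
    (hirr : Irreducible (⟨π, hπmem⟩ : integralClosure ℤ_[p] L))
    (q : ℕ) (hq : Nat.card ((integralClosure ℤ_[p] L) ⧸
      Ideal.span {(⟨π, hπmem⟩ : integralClosure ℤ_[p] L)}) = q)
    (m : ℕ) (j : ℕ) :
    (∀ k : ℕ, ¬ k ≡ (m + j * (q - 1)) [MOD q - 1] →
        (LTpoly q π (m + j * (q - 1))).coeff k = 0) ∧
      (∀ i : ℕ, i ≤ j →
        (LTpoly q π (m + j * (q - 1))).coeff (m + i * (q - 1)) =
          rcoef q π m i j / ((m + i * (q - 1)).factorial : L)) := by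
  have := Ring.HasFiniteQuotients.integralClosure ℤ_[p] ℚ_[p] L
  have hq2 : 2 ≤ q := hq ▸ hirr.one_lt_card_quotient_span
  have : CharZero L := charZero_of_injective_algebraMap (algebraMap ℚ_[p] L).injective
  refine ⟨fun k hk => ?_, fun i hij => ?_⟩
  · rw [coeff_LTpoly]
    split_ifs
    · rw [coeff_pow_eq_zero_of_not_modEq (fun d => coeff_logLT_eq_zero_of_not_modEq (by omega) π) k
        (by rw [mul_one]; exact fun h => hk h.symm), zero_div]
    · rfl
  · have hij' : m + i * (q - 1) ≤ m + j * (q - 1) := by gcongr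
    rw [coeff_LTpoly, if_pos hij', coeff_logLT_pow (by omega), rcoef_eq_sum hq2 π m hij]

/-- Fix `m ∈ {0,…,q−2}` and let `n = m + j(q−1)`.  Writing `P_n(s) = Σ_k b_k^{(n)} s^k`:
(1) `b_k^{(n)} = 0` whenever `k` is not congruent to `n` modulo `q−1`; and
(2) for `0 ≤ i ≤ j`, the coefficient of `s^{m+i(q−1)}` in `P_{m+j(q−1)}` equals
`r^{(m)}_{i,j}/(m+i(q−1))!`. -/
theorem stmt4 (p : ℕ) [Fact p.Prime] (L : Type*) [Field L]
    [Algebra ℚ_[p] L] [FiniteDimensional ℚ_[p] L]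
    [Algebra ℤ_[p] L] [IsScalarTower ℤ_[p] ℚ_[p] L]
    (π : L) (hπmem : π ∈ integralClosure ℤ_[p] L)
    (hirr : Irreducible (⟨π, hπmem⟩ : integralClosure ℤ_[p] L))
    (q : ℕ) (hq : Nat.card ((integralClosure ℤ_[p] L) ⧸
      Ideal.span {(⟨π, hπmem⟩ : integralClosure ℤ_[p] L)}) = q)
    (m : ℕ) (hm : m ≤ q - 2) (j : ℕ) :
    (∀ k : ℕ, ¬ k ≡ (m + j * (q - 1)) [MOD q - 1] →
        (LTpoly q π (m + j * (q - 1))).coeff k = 0) ∧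
      (∀ i : ℕ, i ≤ j →
        (LTpoly q π (m + j * (q - 1))).coeff (m + i * (q - 1)) =
          rcoef q π m i j / ((m + i * (q - 1)).factorial : L)) :=
  stmt4_general p L π hπmem hirr q hq m j
end

section
/- Fix m ∈ {0,1,…,q−2} and let j ≥ i ≥ 0. Then: (1) π^{j−i}·r^{(m)}_{i,j} lies in o_L (i.e. v_π(π^{j−i}·r^{(m)}_{i,j}) ≥ 0); and (2) π^{j−i}·r^{(m)}_{i,j} is congruent to the binomial coefficient C(⟨i⟩, j−i) modulo π^{q−1}o_L. -/
/-!
Multiplying by `π ^ (j - i)` turns the summand of `r_{i,j}` indexed by `k` into the multinomial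
coefficient of `k` times `π ^ (j - i - Σ ℓ k_ℓ)`. Since `(q ^ ℓ - 1) / (q - 1) ≥ ℓ`, with excess at
least `q - 1` once `ℓ ≥ 2`, all these exponents are nonnegative, and the only index whose exponent
is below `q - 1` is `k = (⟨i⟩ - (j - i), j - i, 0, 0, …)`, whose term is `C(⟨i⟩, j - i)`.
-/

open Polynomial PowerSeries Finset

open scoped Nat

/-- `qNat q ℓ = 1 + q + ⋯ + q ^ (ℓ - 1)`, the paper's `(q ^ ℓ - 1) / (q - 1)`. -/
def qNat (q ℓ : ℕ) : ℕ := ∑ t ∈ range ℓ, q ^ t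

section Combinatorics

variable {q : ℕ}

theorem sub_one_add_le_qNat (hq : 1 ≤ q) {ℓ : ℕ} (hℓ : 2 ≤ ℓ) : q - 1 + ℓ ≤ qNat q ℓ := by
  induction ℓ, hℓ using Nat.le_induction with
  | base =>
    simp only [qNat, sum_range_succ, range_one, sum_singleton, pow_zero, pow_one]
    omega
  | succ n _ ih =>
    have := Nat.one_le_pow n q hq
    rw [qNat, sum_range_succ]
    exact (Nat.add_le_add ih this).trans' (by omega)

theorem self_le_qNat (hq : 1 ≤ q) (ℓ : ℕ) : ℓ ≤ qNat q ℓ := by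
  rcases lt_or_ge ℓ 2 with hℓ | hℓ
  · interval_cases ℓ <;> simp [qNat]
  · exact (sub_one_add_le_qNat hq hℓ).trans' (Nat.le_add_left _ _)

theorem weight_qNat_eq (hq : 1 ≤ q) (k : ℕ →₀ ℕ) :
    k.weight (qNat q) = k.weight id + k.weight (fun ℓ ↦ qNat q ℓ - ℓ) := by
  simp only [Finsupp.weight_apply, Finsupp.sum, ← sum_add_distrib, ← smul_add, id,
    Nat.add_sub_cancel' (self_le_qNat hq _)]

theorem weight_id_le_weight_qNat {k : ℕ →₀ ℕ} (h : 1 ≤ q ∨ k.degree = 0) :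
    k.weight id ≤ k.weight (qNat q) := by
  rcases h with hq | hk
  · exact (weight_qNat_eq hq k).symm ▸ Nat.le_add_right _ _
  · simp [(Finsupp.degree_eq_zero_iff k).1 hk]

theorem weight_id_add_le_weight_qNat (hq : 1 ≤ q) {k : ℕ →₀ ℕ} {ℓ : ℕ} (hℓ : 2 ≤ ℓ)
    (hk : k ℓ ≠ 0) : k.weight id + (q - 1) ≤ k.weight (qNat q) := by
  have := Finsupp.le_weight_of_ne_zero' (fun ℓ ↦ qNat q ℓ - ℓ) hk
  have := sub_one_add_le_qNat hq hℓ
  rw [weight_qNat_eq hq]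
  omega

theorem support_subset_range_weight_qNat {k : ℕ →₀ ℕ} (h : 1 ≤ q ∨ k.degree = 0) :
    k.support ⊆ range (k.weight (qNat q) + 1) := fun ℓ hℓ ↦ by
  have := Finsupp.le_weight_of_ne_zero' id (Finsupp.mem_support_iff.1 hℓ)
  have := weight_id_le_weight_qNat h
  simp only [id, mem_range] at *
  omega

theorem eq_single_zero_add_single_one {k : ℕ →₀ ℕ} (hk : ∀ ℓ, 2 ≤ ℓ → k ℓ = 0) :
    k = Finsupp.single 0 (k 0) + Finsupp.single 1 (k 1) := by
  ext (_ | _ | ℓ) <;> simp [hk]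

end Combinatorics

/-- The index set `Q_m(i,j)` of `rcoef`, for `N = m + i(q-1)` and `d = j - i`. -/
noncomputable def rcoefIndex (q N d : ℕ) : Finset (ℕ →₀ ℕ) :=
  (finsuppAntidiag (range (d + 1)) N).filter fun k ↦ k.weight (qNat q) = d

/-- For `q = 0` and `N ≠ 0` the set `Q_m(i,j)` may be infinite. -/
theorem mem_rcoefIndex {q N d : ℕ} (h : 1 ≤ q ∨ N = 0) {k : ℕ →₀ ℕ} :
    k ∈ rcoefIndex q N d ↔ k.degree = N ∧ k.weight (qNat q) = d := by
  rw [rcoefIndex, mem_filter, mem_finsuppAntidiag, Finsupp.degree_apply]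
  refine ⟨fun ⟨⟨hN, hsupp⟩, hd⟩ ↦ ⟨?_, hd⟩, fun ⟨hN, hd⟩ ↦ ?_⟩
  · rwa [sum_subset hsupp fun ℓ _ hℓ ↦ Finsupp.notMem_support_iff.1 hℓ]
  · have hsupp : k.support ⊆ range (d + 1) :=
      hd ▸ support_subset_range_weight_qNat (by rwa [Finsupp.degree_apply, hN])
    exact ⟨⟨by rwa [← sum_subset hsupp fun ℓ _ hℓ ↦ Finsupp.notMem_support_iff.1 hℓ], hsupp⟩, hd⟩

theorem rcoef_eq_sum_s6 {L : Type*} [Field L] {q : ℕ} (π : L) {m i j : ℕ}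
    (h : 1 ≤ q ∨ m + i * (q - 1) = 0) :
    rcoef q π m i j = ∑ k ∈ rcoefIndex q (m + i * (q - 1)) (j - i),
      ((m + i * (q - 1))! : L) / (k.prod (fun _ n ↦ (n ! : L)) * π ^ k.weight id) := by
  have hT : ∀ k, k ∈ rcoefIndex q (m + i * (q - 1)) (j - i) ↔
      (∑ ℓ ∈ k.support, k ℓ) = m + i * (q - 1) ∧
        (∑ ℓ ∈ k.support, k ℓ * ∑ t ∈ range ℓ, q ^ t) = j - i := fun k ↦ mem_rcoefIndex h
  rw [← finsum_mem_coe_finset]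
  refine finsum_congr fun k ↦ ?_
  have hw : k.weight id = ∑ ℓ ∈ k.support, ℓ * k ℓ := sum_congr rfl fun _ _ ↦ mul_comm _ _
  rw [mem_coe, hT, hw]
  rfl

theorem pow_mul_factorial_div_eq_multinomial {K : Type*} [Field K] [CharZero K] {π : K}
    (hπ : π ≠ 0) (k : ℕ →₀ ℕ) {d : ℕ} (hd : k.weight id ≤ d) :
    π ^ d * ((k.degree)! / (k.prod (fun _ n ↦ (n ! : K)) * π ^ k.weight id)) =
      k.multinomial * π ^ (d - k.weight id) := by
  have hspec : k.prod (fun _ n ↦ (n ! : K)) * k.multinomial = (k.degree)! := by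
    exact_mod_cast Nat.multinomial_spec k.support k
  have hprod : k.prod (fun _ n ↦ (n ! : K)) ≠ 0 :=
    Finset.prod_ne_zero_iff.2 fun _ _ ↦ Nat.cast_ne_zero.2 (Nat.factorial_ne_zero _)
  rw [← hspec, ← Nat.sub_add_cancel hd, pow_add, Nat.add_sub_cancel]
  field_simp

theorem pow_mul_rcoef_eq_sum {L : Type*} [Field L] [CharZero L] {q : ℕ} {π : L} (hπ : π ≠ 0)
    {m i j : ℕ} (h : 1 ≤ q ∨ m + i * (q - 1) = 0) :
    π ^ (j - i) * rcoef q π m i j = ∑ k ∈ rcoefIndex q (m + i * (q - 1)) (j - i),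
      (k.multinomial : L) * π ^ (j - i - k.weight id) := by
  rw [rcoef_eq_sum_s6 π h, mul_sum]
  refine sum_congr rfl fun k hk ↦ ?_
  obtain ⟨hN, hd⟩ := (mem_rcoefIndex h).1 hk
  rw [← hN, pow_mul_factorial_div_eq_multinomial hπ k (hd ▸ weight_id_le_weight_qNat (hN ▸ h))]

theorem single_zero_add_single_one_mem_rcoefIndex_iff {q N d : ℕ} (hq : 1 ≤ q) :
    Finsupp.single 0 (N - d) + Finsupp.single 1 d ∈ rcoefIndex q N d ↔ d ≤ N := by
  simp only [mem_rcoefIndex (Or.inl hq), map_add, Finsupp.degree_single, Finsupp.weight_single,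
    qNat, smul_eq_mul, range_zero, sum_empty, mul_zero, range_one, sum_singleton, pow_zero, mul_one,
    zero_add, and_true]
  omega

theorem multinomial_single_zero_add_single_one (a b : ℕ) :
    (Finsupp.single 0 a + Finsupp.single 1 b).multinomial = (b + a).choose b := by
  rw [Finsupp.multinomial_eq_of_support_subset (s := {1, 0}), Nat.binomial_eq_choose one_ne_zero]
  · simp
  · exact Finsupp.support_add.trans (union_subset (Finsupp.support_single_subset.trans (by simp))
      (Finsupp.support_single_subset.trans (by simp)))

theorem weight_id_add_le_of_mem_rcoefIndex {q N d : ℕ} (hq : 1 ≤ q) {k : ℕ →₀ ℕ}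
    (hk : k ∈ rcoefIndex q N d) (hne : k ≠ Finsupp.single 0 (N - d) + Finsupp.single 1 d) :
    k.weight id + (q - 1) ≤ d := by
  obtain ⟨hN, hd⟩ := (mem_rcoefIndex (Or.inl hq)).1 hk
  obtain ⟨ℓ, hℓ, hkℓ⟩ : ∃ ℓ, 2 ≤ ℓ ∧ k ℓ ≠ 0 := by
    by_contra! h0
    refine hne ?_
    rw [eq_single_zero_add_single_one h0] at hN hd ⊢
    simp only [map_add, Finsupp.degree_single, Finsupp.weight_single, qNat, range_zero, sum_empty,
      range_one, sum_singleton, pow_zero, smul_eq_mul, mul_zero, mul_one, zero_add] at hN hd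
    rw [← hd, ← hN, Nat.add_sub_cancel]
  exact hd ▸ weight_id_add_le_weight_qNat hq hℓ hkℓ

section Valuation

variable {L : Type*} [Field L] {S : Type*} [SetLike S L] [SubsemiringClass S L]
  (s : S) {π : L} (hπ : π ≠ 0) (hπs : π ∈ s)
include hπs

theorem sum_rcoefIndex_sub_choose_eq {q : ℕ} (hq : 1 ≤ q) (N d : ℕ) :
    ∃ z ∈ s, ∑ k ∈ rcoefIndex q N d, (k.multinomial : L) * π ^ (d - k.weight id) -
      (N.choose d : L) = π ^ (q - 1) * z := by
  set k₀ := Finsupp.single 0 (N - d) + Finsupp.single 1 d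
  have hsplit : ∑ k ∈ rcoefIndex q N d, (k.multinomial : L) * π ^ (d - k.weight id) -
      (N.choose d : L) = ∑ k ∈ (rcoefIndex q N d).erase k₀,
        (k.multinomial : L) * π ^ (d - k.weight id) := by
    by_cases hdN : d ≤ N
    · have hk₀ : k₀.weight id = d := by
        simp only [k₀, map_add, Finsupp.weight_single, smul_eq_mul, id, mul_zero, mul_one, zero_add]
      rw [← add_sum_erase _ _ ((single_zero_add_single_one_mem_rcoefIndex_iff hq).2 hdN),
        multinomial_single_zero_add_single_one, Nat.add_sub_cancel' hdN, hk₀, Nat.sub_self,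
        pow_zero, mul_one, add_sub_cancel_left]
    · rw [erase_eq_of_notMem (mt (single_zero_add_single_one_mem_rcoefIndex_iff hq).1 hdN),
        Nat.choose_eq_zero_of_lt (not_le.1 hdN), Nat.cast_zero, sub_zero]
  refine ⟨∑ k ∈ (rcoefIndex q N d).erase k₀, (k.multinomial : L) * π ^ (d - k.weight id - (q - 1)),
    sum_mem fun k _ ↦ mul_mem (natCast_mem s _) (pow_mem hπs _), ?_⟩
  rw [hsplit, mul_sum]
  refine sum_congr rfl fun k hk ↦ ?_
  have := weight_id_add_le_of_mem_rcoefIndex hq (mem_of_mem_erase hk) (ne_of_mem_erase hk)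
  rw [mul_left_comm, ← pow_add]
  congr 2
  omega

variable [CharZero L]
include hπ

theorem pow_mul_rcoef_mem {q m i j : ℕ} (h : 1 ≤ q ∨ m + i * (q - 1) = 0) :
    π ^ (j - i) * rcoef q π m i j ∈ s := by
  rw [pow_mul_rcoef_eq_sum hπ h]
  exact sum_mem fun k _ ↦ mul_mem (natCast_mem s _) (pow_mem hπs _)

theorem exists_pow_mul_rcoef_sub_choose_eq {q : ℕ} (hq : 1 ≤ q) (m i j : ℕ) :
    ∃ z ∈ s, π ^ (j - i) * rcoef q π m i j - ((m + i * (q - 1)).choose (j - i) : L) =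
      π ^ (q - 1) * z := by
  rw [pow_mul_rcoef_eq_sum hπ (Or.inl hq)]
  exact sum_rcoefIndex_sub_choose_eq s hπs hq _ _

end Valuation

theorem stmt6_general (p : ℕ) [Fact p.Prime] (L : Type*) [Field L]
    [Algebra ℚ_[p] L] [Algebra ℤ_[p] L]
    (π : L) (hπmem : π ∈ integralClosure ℤ_[p] L)
    (hirr : Irreducible (⟨π, hπmem⟩ : integralClosure ℤ_[p] L))
    (q : ℕ) (m : ℕ) (hm : m ≤ q - 2) (i j : ℕ) :
    π ^ (j - i) * rcoef q π m i j ∈ integralClosure ℤ_[p] L ∧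
      ∃ z ∈ integralClosure ℤ_[p] L,
        π ^ (j - i) * rcoef q π m i j - ((m + i * (q - 1)).choose (j - i) : L) =
          π ^ (q - 1) * z := by
  have : CharZero L := charZero_of_injective_algebraMap (algebraMap ℚ_[p] L).injective
  have hπ : π ≠ 0 := fun h ↦ hirr.ne_zero (Subtype.ext h)
  rcases Nat.eq_zero_or_pos q with rfl | hq
  · have hmem : π ^ (j - i) * rcoef 0 π m i j ∈ integralClosure ℤ_[p] L :=
      pow_mul_rcoef_mem _ hπ hπmem (Or.inr (by rw [Nat.zero_sub, mul_zero]; omega))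
    rw [Nat.zero_sub, pow_zero]
    exact ⟨hmem, _, sub_mem hmem (natCast_mem _ _), (one_mul _).symm⟩
  · exact ⟨pow_mul_rcoef_mem _ hπ hπmem (Or.inl hq),
      exists_pow_mul_rcoef_sub_choose_eq _ hπ hπmem hq m i j⟩

/-- Fix `m ∈ {0,…,q−2}` and let `j ≥ i ≥ 0`.  Then:
(1) `π^{j−i}·r^{(m)}_{i,j}` lies in `o_L`; and
(2) `π^{j−i}·r^{(m)}_{i,j}` is congruent to the binomial coefficient `C(m+i(q−1), j−i)`
modulo `π^{q−1}·o_L`. -/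
theorem stmt6 (p : ℕ) [Fact p.Prime] (L : Type*) [Field L]
    [Algebra ℚ_[p] L] [FiniteDimensional ℚ_[p] L]
    [Algebra ℤ_[p] L] [IsScalarTower ℤ_[p] ℚ_[p] L]
    (π : L) (hπmem : π ∈ integralClosure ℤ_[p] L)
    (hirr : Irreducible (⟨π, hπmem⟩ : integralClosure ℤ_[p] L))
    (q : ℕ) (hq : Nat.card ((integralClosure ℤ_[p] L) ⧸
      Ideal.span {(⟨π, hπmem⟩ : integralClosure ℤ_[p] L)}) = q)
    (m : ℕ) (hm : m ≤ q - 2) (i j : ℕ) (hij : i ≤ j) :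
    π ^ (j - i) * rcoef q π m i j ∈ integralClosure ℤ_[p] L ∧
      ∃ z ∈ integralClosure ℤ_[p] L,
        π ^ (j - i) * rcoef q π m i j - ((m + i * (q - 1)).choose (j - i) : L) =
          π ^ (q - 1) * z :=
  stmt6_general p L π hπmem hirr q m hm i j
end

section
/- Let (α_k)_{k≥0} be a π-ordering of o_L and let (f_k)_{k≥0} be the associated Lagrange polynomials. Let R be a commutative o_L-algebra that is torsion-free as an o_L-module (so R embeds into R_L := R ⊗_{o_L} L). Then the images of f_0, f_1, f_2, … in R_L[X] form an R-module basis of Int(o_L, R) := { g ∈ R_L[X] : g(a) ∈ R for all a ∈ o_L }. -/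
open Polynomial TensorProduct

/-!
Evaluation at `α_0, α_1, …` is unitriangular on the `f_k`: `f_i(α_k) = 0` for `i > k` and
`f_k(α_k) = 1`. Since `f_k` has degree `k` and a unit leading coefficient, every `g ∈ R_L[X]` is
an `R_L`-combination `∑ c_k f_k`, and the coefficients are recovered inductively as
`c_k = g(α_k) - ∑_{i<k} c_i f_i(α_k)`. The π-ordering inequality says exactly that
`f_i(o_L) ⊆ o_L` (and, `o_L` being infinite, forces the `α_k` to be distinct), so `g(o_L) ⊆ R`
forces every `c_k` into `R`. Torsion-freeness makes `R → R_L` injective, so linear independence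
over `R_L` descends to `R`.
-/

/-- The Lagrange polynomials of a sequence `α`: `f_0 = 1` and
`f_k(X) = ∏_{i<k} (X − α_i)/(α_k − α_i)` (the formula below specializes to `1` at `k = 0`). -/
noncomputable def lagrangePoly {L : Type*} [Field L] (α : ℕ → L) (k : ℕ) : Polynomial L :=
  (∏ i ∈ Finset.range k, (Polynomial.X - Polynomial.C (α i))) *
    Polynomial.C ((∏ i ∈ Finset.range k, (α k - α i))⁻¹)

theorem TensorProduct.algebraMap_injective_of_isFractionRing {O L R : Type*} [CommRing O]
    [IsDomain O] [CommRing L] [Algebra O L] [IsFractionRing O L] [CommRing R] [Algebra O R]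
    [NoZeroSMulDivisors O R] :
    Function.Injective (algebraMap R (R ⊗[O] L)) := by
  have : IsLocalizedModule (nonZeroDivisors O) (TensorProduct.mk O L R 1) :=
    (isLocalizedModule_iff_isBaseChange _ L _).mpr (TensorProduct.isBaseChange O R L)
  have hmk : Function.Injective (TensorProduct.mk O L R 1) :=
    (IsLocalizedModule.injective_iff_isRegular (nonZeroDivisors O) _).mpr fun c =>
      Module.IsTorsionFree.isSMulRegular (isRegular_iff_mem_nonZeroDivisors.mpr c.2)
  exact (TensorProduct.comm O L R).injective.comp hmk

namespace Polynomial

section Triangular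

variable {K : Type*} [CommRing K] {G : ℕ → K[X]} {x : ℕ → K}

-- With `M = ⊥` this gives linear independence, with `M` the image of `R` the `R`-integrality
-- of the coefficients.
theorem coeff_mem_of_forall_eval_mem (hdiag : ∀ k, (G k).eval (x k) = 1)
    (hupper : ∀ i k, k < i → (G i).eval (x k) = 0) (M : AddSubgroup K)
    (hM : ∀ m ∈ M, ∀ i k, i < k → m * (G i).eval (x k) ∈ M) (c : ℕ →₀ K)
    (hc : ∀ k, (Finsupp.linearCombination K G c).eval (x k) ∈ M) (k : ℕ) : c k ∈ M := by
  induction k using Nat.strong_induction_on with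
  | _ k ih =>
  have hsum : (Finsupp.linearCombination K G c).eval (x k) =
      ∑ i ∈ insert k c.support, c i * (G i).eval (x k) := by
    rw [Finsupp.linearCombination_apply,
      Finsupp.sum_of_support_subset c (Finset.subset_insert k c.support) _ (by simp),
      eval_finsetSum]
    simp only [eval_smul, smul_eq_mul]
  rw [← Finset.add_sum_erase _ _ (Finset.mem_insert_self k _), hdiag, mul_one] at hsum
  rw [eq_sub_of_add_eq hsum.symm]
  refine M.sub_mem (hc k) (M.sum_mem fun i hi => ?_)
  rcases lt_or_gt_of_ne (Finset.ne_of_mem_erase hi) with hik | hki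
  · exact hM _ (ih i hik) i k hik
  · rw [hupper i k hki, mul_zero]
    exact M.zero_mem

theorem linearIndependent_of_triangular_eval (hdiag : ∀ k, (G k).eval (x k) = 1)
    (hupper : ∀ i k, k < i → (G i).eval (x k) = 0) : LinearIndependent K G :=
  linearIndependent_iff.mpr fun c hc => Finsupp.ext fun k => by
    simpa using coeff_mem_of_forall_eval_mem hdiag hupper ⊥ (by simp) c (by simp [hc]) k

theorem span_range_eq_top_of_isUnit_coeff (hdeg : ∀ k, (G k).natDegree ≤ k)
    (hunit : ∀ k, IsUnit ((G k).coeff k)) : Submodule.span K (Set.range G) = ⊤ := by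
  nontriviality K
  have hdegree (k : ℕ) : (G k).degree = k :=
    degree_eq_of_le_of_coeff_ne_zero (degree_le_of_natDegree_le (hdeg k)) (hunit k).ne_zero
  let S : Sequence K := ⟨G, hdegree⟩
  refine S.span fun k => ?_
  rw [leadingCoeff, natDegree_eq_of_degree_eq_some (hdegree k)]
  exact hunit k

theorem mem_span_range_iff_forall_eval_mem {R : Type*} [CommRing R] [Algebra R K] {ι : Type*}
    {e : ι → K} {α : ℕ → ι} (hdeg : ∀ k, (G k).natDegree ≤ k)
    (hunit : ∀ k, IsUnit ((G k).coeff k)) (hdiag : ∀ k, (G k).eval (e (α k)) = 1)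
    (hupper : ∀ i k, k < i → (G i).eval (e (α k)) = 0)
    (hval : ∀ k a, (G k).eval (e a) ∈ (algebraMap R K).range) (g : K[X]) :
    g ∈ Submodule.span R (Set.range G) ↔ ∀ a, g.eval (e a) ∈ (algebraMap R K).range := by
  constructor
  · intro hg a
    induction hg using Submodule.span_induction with
    | mem _ h => obtain ⟨k, rfl⟩ := h; exact hval k a
    | zero => simp
    | add _ _ _ _ hf hg => rw [eval_add]; exact add_mem hf hg
    | smul r _ _ hf =>
      rw [eval_smul, Algebra.smul_def]
      exact mul_mem (RingHom.mem_range_self _ r) hf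
  · intro hg
    obtain ⟨c, rfl⟩ := Finsupp.mem_span_range_iff_exists_finsupp.mp
      ((span_range_eq_top_of_isUnit_coeff hdeg hunit).ge (Submodule.mem_top (x := g)))
    have hc := coeff_mem_of_forall_eval_mem (x := e ∘ α) hdiag hupper
      (algebraMap R K).range.toAddSubgroup
      (fun _ hm i _ _ => (algebraMap R K).range.mul_mem hm (hval i _)) c
      (fun k => by rw [Finsupp.linearCombination_apply]; exact hg _)
    refine Submodule.sum_mem _ fun k _ => ?_
    obtain ⟨r, hr⟩ := hc k
    simp only [← hr, algebraMap_smul]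
    exact Submodule.smul_mem _ r (Submodule.subset_span ⟨k, rfl⟩)

end Triangular

end Polynomial

section Lagrange

variable {L : Type*} [Field L] {β : ℕ → L}

theorem eval_lagrangePoly (β : ℕ → L) (k : ℕ) (x : L) :
    (lagrangePoly β k).eval x =
      (∏ i ∈ Finset.range k, (x - β i)) * (∏ i ∈ Finset.range k, (β k - β i))⁻¹ := by
  simp [lagrangePoly, eval_prod]

theorem prod_sub_ne_zero_of_injective (hβ : Function.Injective β) (k : ℕ) :
    ∏ i ∈ Finset.range k, (β k - β i) ≠ 0 :=
  Finset.prod_ne_zero_iff.mpr fun _ hi => sub_ne_zero.mpr (hβ.ne (Finset.mem_range.mp hi).ne')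

theorem eval_lagrangePoly_self (hβ : Function.Injective β) (k : ℕ) :
    (lagrangePoly β k).eval (β k) = 1 := by
  rw [eval_lagrangePoly, mul_inv_cancel₀ (prod_sub_ne_zero_of_injective hβ k)]

theorem eval_lagrangePoly_of_lt {j k : ℕ} (h : j < k) : (lagrangePoly β k).eval (β j) = 0 := by
  rw [eval_lagrangePoly, Finset.prod_eq_zero (Finset.mem_range.mpr h) (sub_self _), zero_mul]

theorem natDegree_lagrangePoly_le (β : ℕ → L) (k : ℕ) : (lagrangePoly β k).natDegree ≤ k := by
  refine natDegree_mul_le.trans ?_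
  rw [natDegree_C, add_zero]
  exact (natDegree_prod_le _ _).trans (by simp)

theorem coeff_lagrangePoly_self (β : ℕ → L) (k : ℕ) :
    (lagrangePoly β k).coeff k = (∏ i ∈ Finset.range k, (β k - β i))⁻¹ := by
  set P := ∏ i ∈ Finset.range k, (X - C (β i))
  have hmonic : P.Monic := monic_prod_of_monic _ _ fun i _ => monic_X_sub_C (β i)
  have hdeg : P.natDegree = k := by
    rw [natDegree_prod_of_monic _ _ fun i _ => monic_X_sub_C (β i)]
    simp
  have hlead : P.coeff k = 1 := by rw [← hmonic.coeff_natDegree, hdeg]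
  rw [lagrangePoly, coeff_mul_C, hlead, one_mul]

theorem linearIndependent_map_lagrangePoly {K : Type*} [CommRing K] (ι : L →+* K)
    (hβ : Function.Injective β) : LinearIndependent K fun k => (lagrangePoly β k).map ι :=
  linearIndependent_of_triangular_eval (x := fun k => ι (β k))
    (fun k => by rw [eval_map_apply, eval_lagrangePoly_self hβ, map_one])
    (fun _ _ h => by rw [eval_map_apply, eval_lagrangePoly_of_lt h, map_zero])

end Lagrange

theorem mem_span_map_lagrangePoly_iff {O L R : Type*} [CommRing O] [Field L] [Algebra O L]
    [CommRing R] [Algebra O R] (α : ℕ → O) (hα : Function.Injective fun i => algebraMap O L (α i))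
    (hint : ∀ k (a : O), (lagrangePoly (fun i => algebraMap O L (α i)) k).eval (algebraMap O L a) ∈
      (algebraMap O L).range)
    (g : Polynomial (R ⊗[O] L)) :
    g ∈ Submodule.span R (Set.range fun k =>
        (lagrangePoly (fun i => algebraMap O L (α i)) k).map
          ((Algebra.TensorProduct.includeRight : L →ₐ[O] R ⊗[O] L) : L →+* _)) ↔
      ∀ a : O, ∃ r : R, g.eval (algebraMap O (R ⊗[O] L) a) = r ⊗ₜ[O] (1 : L) := by
  set ι : L →+* R ⊗[O] L :=
    ((Algebra.TensorProduct.includeRight : L →ₐ[O] R ⊗[O] L) : L →+* R ⊗[O] L)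
  have hι (a : O) : algebraMap O (R ⊗[O] L) a = ι (algebraMap O L a) :=
    (Algebra.TensorProduct.includeRight.commutes a).symm
  rw [mem_span_range_iff_forall_eval_mem (e := algebraMap O (R ⊗[O] L)) (α := α)]
  · exact forall_congr' fun a => exists_congr fun r => eq_comm
  · exact fun k => natDegree_map_le.trans (natDegree_lagrangePoly_le _ k)
  · intro k
    rw [coeff_map, coeff_lagrangePoly_self]
    exact (isUnit_iff_ne_zero.mpr (inv_ne_zero (prod_sub_ne_zero_of_injective hα k))).map ι
  · intro k
    rw [hι, eval_map_apply, eval_lagrangePoly_self hα, map_one]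
  · intro i k h
    rw [hι, eval_map_apply, eval_lagrangePoly_of_lt (β := fun i => algebraMap O L (α i)) h,
      map_zero]
  · intro k a
    obtain ⟨t, ht⟩ := hint k a
    rw [hι, eval_map_apply, ← ht, ← hι, IsScalarTower.algebraMap_apply O R]
    exact RingHom.mem_range_self _ _

-- A `v`-ordering of `S` in Bhargava's sense; for `v = v_π` and `S = o_L` this is a π-ordering.
structure IsPOrdering {L Γ : Type*} [Field L] [LinearOrderedAddCommMonoidWithTop Γ]
    (v : AddValuation L Γ) (S : Set L) (α : ℕ → L) : Prop where
  mem : ∀ k, α k ∈ S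
  valuation_prod_le : ∀ k, 1 ≤ k → ∀ s ∈ S,
    v (∏ i ∈ Finset.range k, (α k - α i)) ≤ v (∏ i ∈ Finset.range k, (s - α i))

namespace IsPOrdering

variable {L Γ : Type*} [Field L] [LinearOrderedAddCommMonoidWithTop Γ] [Nontrivial Γ]
  {v : AddValuation L Γ} {S : Set L} {α : ℕ → L}

theorem injective (h : IsPOrdering v S α) (hS : S.Infinite) : Function.Injective α := by
  classical
  refine Function.Injective.of_lt_imp_ne fun i k hik heq => ?_
  obtain ⟨s, hs, hsα⟩ := hS.exists_notMem_finset ((Finset.range k).image α)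
  have hzero : ∏ j ∈ Finset.range k, (α k - α j) = 0 :=
    Finset.prod_eq_zero (Finset.mem_range.mpr hik) (by rw [heq, sub_self])
  have hle := h.valuation_prod_le k (by omega) s hs
  rw [hzero, v.map_zero, top_le_iff, v.top_iff, Finset.prod_eq_zero_iff] at hle
  obtain ⟨j, hj, hsj⟩ := hle
  exact hsα (Finset.mem_image.mpr ⟨j, hj, (sub_eq_zero.mp hsj).symm⟩)

theorem valuation_eval_lagrangePoly_nonneg (h : IsPOrdering v S α) (hS : S.Infinite) (k : ℕ)
    {s : L} (hs : s ∈ S) : 0 ≤ v ((lagrangePoly α k).eval s) := by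
  rcases Nat.eq_zero_or_pos k with rfl | hk
  · simp [lagrangePoly]
  have hc := prod_sub_ne_zero_of_injective (h.injective hS) k
  have hprod : ∏ i ∈ Finset.range k, (s - α i) =
      (lagrangePoly α k).eval s * ∏ i ∈ Finset.range k, (α k - α i) := by
    rw [eval_lagrangePoly, inv_mul_cancel_right₀ hc]
  have hle := h.valuation_prod_le k hk s hs
  rw [hprod, v.map_mul] at hle
  exact (add_le_add_iff_left_of_ne_top (v.top_iff.not.mpr hc)).mp (by rwa [zero_add])

end IsPOrdering

theorem stmt11_general (p : ℕ) [Fact p.Prime] (L : Type*) [Field L]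
    [Algebra ℚ_[p] L] [FiniteDimensional ℚ_[p] L]
    [Algebra ℤ_[p] L] [IsScalarTower ℤ_[p] ℚ_[p] L]
    (v : AddValuation L (WithTop ℤ))
    (hvO : ∀ x : L, 0 ≤ v x ↔ x ∈ integralClosure ℤ_[p] L)
    (α : ℕ → integralClosure ℤ_[p] L)
    (hord : ∀ k : ℕ, 1 ≤ k → ∀ s : integralClosure ℤ_[p] L,
      v (∏ i ∈ Finset.range k, ((α k : L) - (α i : L))) ≤
        v (∏ i ∈ Finset.range k, ((s : L) - (α i : L))))
    (R : Type*) [CommRing R] [Algebra (integralClosure ℤ_[p] L) R]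
    [NoZeroSMulDivisors (integralClosure ℤ_[p] L) R] :
    LinearIndependent R (fun k : ℕ =>
      ((lagrangePoly (fun i => (α i : L)) k).map
        ((Algebra.TensorProduct.includeRight :
          L →ₐ[integralClosure ℤ_[p] L] R ⊗[integralClosure ℤ_[p] L] L) : L →+* _) :
        Polynomial (R ⊗[integralClosure ℤ_[p] L] L))) ∧
    ∀ g : Polynomial (R ⊗[integralClosure ℤ_[p] L] L),
      (∀ a : integralClosure ℤ_[p] L,
        ∃ r : R, Polynomial.eval
          (algebraMap (integralClosure ℤ_[p] L) (R ⊗[integralClosure ℤ_[p] L] L) a) g =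
            r ⊗ₜ[integralClosure ℤ_[p] L] (1 : L)) ↔
      g ∈ Submodule.span R (Set.range (fun k : ℕ =>
        ((lagrangePoly (fun i => (α i : L)) k).map
          ((Algebra.TensorProduct.includeRight :
            L →ₐ[integralClosure ℤ_[p] L] R ⊗[integralClosure ℤ_[p] L] L) : L →+* _) :
          Polynomial (R ⊗[integralClosure ℤ_[p] L] L)))) := by
  have : IsFractionRing (integralClosure ℤ_[p] L) L :=
    integralClosure.isFractionRing_of_finite_extension ℚ_[p] L
  have : CharZero L := charZero_of_injective_algebraMap (algebraMap ℚ_[p] L).injective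
  have hS : (integralClosure ℤ_[p] L : Set L).Infinite := Set.infinite_coe_iff.mp inferInstance
  have hα : IsPOrdering v (integralClosure ℤ_[p] L) fun k => (α k : L) :=
    ⟨fun k => (α k).2, fun k hk s hs => hord k hk ⟨s, hs⟩⟩
  have : FaithfulSMul R (R ⊗[integralClosure ℤ_[p] L] L) :=
    (faithfulSMul_iff_algebraMap_injective _ _).mpr
      TensorProduct.algebraMap_injective_of_isFractionRing
  refine ⟨(linearIndependent_map_lagrangePoly _ (hα.injective hS)).restrict_scalars' R,
    fun g => (mem_span_map_lagrangePoly_iff α (hα.injective hS) (fun k a => ?_) g).symm⟩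
  exact ⟨⟨_, (hvO _).mp (hα.valuation_eval_lagrangePoly_nonneg hS k a.2)⟩, rfl⟩

/-- Let `(α_k)` be a `π`-ordering of `o_L` with associated Lagrange polynomials `(f_k)`, and let
`R` be a commutative `o_L`-algebra, torsion-free as `o_L`-module.  Then the images of the `f_k`
in `R_L[X] = (R ⊗_{o_L} L)[X]` form an `R`-module basis of
`Int(o_L, R) = { g ∈ R_L[X] : g(a) ∈ R for all a ∈ o_L }`: they are linearly independent over
`R`, and a polynomial `g ∈ R_L[X]` is `R`-valued on `o_L` iff it lies in their `R`-span. -/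
theorem stmt11 (p : ℕ) [Fact p.Prime] (L : Type*) [Field L]
    [Algebra ℚ_[p] L] [FiniteDimensional ℚ_[p] L]
    [Algebra ℤ_[p] L] [IsScalarTower ℤ_[p] ℚ_[p] L]
    (v : AddValuation L (WithTop ℤ))
    (hvO : ∀ x : L, 0 ≤ v x ↔ x ∈ integralClosure ℤ_[p] L)
    (π : L) (hπmem : π ∈ integralClosure ℤ_[p] L) (hvπ : v π = 1)
    (α : ℕ → integralClosure ℤ_[p] L)
    (hord : ∀ k : ℕ, 1 ≤ k → ∀ s : integralClosure ℤ_[p] L,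
      v (∏ i ∈ Finset.range k, ((α k : L) - (α i : L))) ≤
        v (∏ i ∈ Finset.range k, ((s : L) - (α i : L))))
    (R : Type*) [CommRing R] [Algebra (integralClosure ℤ_[p] L) R]
    [NoZeroSMulDivisors (integralClosure ℤ_[p] L) R] :
    LinearIndependent R (fun k : ℕ =>
      ((lagrangePoly (fun i => (α i : L)) k).map
        ((Algebra.TensorProduct.includeRight :
          L →ₐ[integralClosure ℤ_[p] L] R ⊗[integralClosure ℤ_[p] L] L) : L →+* _) :
        Polynomial (R ⊗[integralClosure ℤ_[p] L] L))) ∧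
    ∀ g : Polynomial (R ⊗[integralClosure ℤ_[p] L] L),
      (∀ a : integralClosure ℤ_[p] L,
        ∃ r : R, Polynomial.eval
          (algebraMap (integralClosure ℤ_[p] L) (R ⊗[integralClosure ℤ_[p] L] L) a) g =
            r ⊗ₜ[integralClosure ℤ_[p] L] (1 : L)) ↔
      g ∈ Submodule.span R (Set.range (fun k : ℕ =>
        ((lagrangePoly (fun i => (α i : L)) k).map
          ((Algebra.TensorProduct.includeRight :
            L →ₐ[integralClosure ℤ_[p] L] R ⊗[integralClosure ℤ_[p] L] L) : L →+* _) :
          Polynomial (R ⊗[integralClosure ℤ_[p] L] L)))) :=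
  stmt11_general p L v hvO α hord R
end

section
/- Let R be a valuation ring with fraction field Frac(R), let m ≥ n ≥ 1, and let A be an m × n matrix with entries in R whose rank (as a matrix over Frac(R)) equals n. Then there exists an invertible matrix U ∈ GL_m(R) (a product of elementary row-operation matrices) such that the matrix UA is upper-triangular, i.e. (UA)_{ij} = 0 whenever i > j, and UA still has rank n. -/
/-!
Column by column: divisibility in a valuation ring is total, so one can swap into the pivot
position an entry of the current column, on or below the diagonal, that divides all the others.
Then a single shear `1 - v eₚᵀ`, with `v` supported strictly below the pivot `p` (so that
`(v eₚᵀ)² = 0`), clears the column below the diagonal. Row operations invertible over `R` stay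
invertible over `Frac(R)`, so the rank there is unchanged.
-/

open Matrix

theorem PreValuationRing.exists_dvd_forall_mem {R ι : Type*} [CommRing R] [Nontrivial R]
    [PreValuationRing R] {s : Finset ι} (hs : s.Nonempty) (f : ι → R) :
    ∃ i ∈ s, ∀ j ∈ s, f i ∣ f j := by
  classical
  obtain ⟨i, hi, hmax⟩ := s.exists_max_image (fun i => Ideal.span {f i}) hs
  exact ⟨i, hi, fun j hj => Ideal.span_singleton_le_span_singleton.mp (hmax j hj)⟩

theorem Equiv.min_le_swap_apply {α : Type*} [LinearOrder α] {p i₀ : α} (h : p ≤ i₀)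
    (i : α) : min i p ≤ Equiv.swap p i₀ i := by
  rw [Equiv.swap_apply_def]
  split_ifs <;> simp_all

namespace Matrix

variable {R : Type*} {m n : ℕ}

def IsUpperTriangularUpTo [Zero R] (k : ℕ) (A : Matrix (Fin m) (Fin n) R) : Prop :=
  ∀ (i : Fin m) (j : Fin n), (j : ℕ) < i → (j : ℕ) < k → A i j = 0

theorem isUpperTriangularUpTo_zero [Zero R] (A : Matrix (Fin m) (Fin n) R) :
    IsUpperTriangularUpTo 0 A :=
  fun _ _ _ h => (Nat.not_lt_zero _ h).elim

variable [CommRing R]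

theorem isUnit_permMatrix {ι : Type*} [Fintype ι] [DecidableEq ι] (σ : Equiv.Perm ι) :
    IsUnit (σ.permMatrix R) :=
  (isUnit_iff_isUnit_det _).mpr <| by
    simpa using (Equiv.Perm.sign σ).isUnit.map (Int.castRingHom R)

theorem rank_map_mul_of_isUnit {ι κ K : Type*} [Fintype ι] [DecidableEq ι] [Fintype κ]
    [CommRing K] (f : R →+* K) {U : Matrix ι ι R} (hU : IsUnit U) (A : Matrix ι κ R) :
    ((U * A).map f).rank = (A.map f).rank := by
  rw [Matrix.map_mul]
  refine rank_mul_eq_right_of_isUnit_det _ _ ((isUnit_iff_isUnit_det _).mp ?_)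
  simpa using hU.map f.mapMatrix

theorem IsUpperTriangularUpTo.exists_isUnit_mul_succ_of_dvd {A : Matrix (Fin m) (Fin n) R}
    {p : Fin m} {q : Fin n} (hpq : (p : ℕ) = q) (hA : IsUpperTriangularUpTo q A)
    (hdvd : ∀ i : Fin m, (p : ℕ) < i → A p q ∣ A i q) :
    ∃ U : Matrix (Fin m) (Fin m) R, IsUnit U ∧ IsUpperTriangularUpTo (q + 1) (U * A) := by
  choose! c hc using hdvd
  set v : Fin m → R := fun i => if (p : ℕ) < i then c i else 0
  set N := vecMulVec v (Pi.single p 1)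
  have hN : N * N = 0 := by
    simp [N, vecMulVec_mul_vecMulVec, v]
  refine ⟨1 - N, IsNilpotent.isUnit_one_sub ⟨2, by rw [pow_two, hN]⟩, fun i j hij hjq => ?_⟩
  have hNA : ((1 - N) * A : Matrix (Fin m) (Fin n) R) i j = A i j - v i * A p j := by
    rw [Matrix.sub_mul, Matrix.one_mul, vecMulVec_mul, single_one_vecMul]
    rfl
  rw [hNA]
  rcases Nat.lt_succ_iff_lt_or_eq.mp hjq with hj | hj
  · rw [hA i j hij hj, hA p j (by omega) hj]
    ring
  · obtain rfl : j = q := Fin.ext hj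
    have hpi : (p : ℕ) < i := by omega
    simp only [v, if_pos hpi, hc i hpi]
    ring

section PreValuationRing

variable [Nontrivial R] [PreValuationRing R]

theorem IsUpperTriangularUpTo.exists_perm_dvd {A : Matrix (Fin m) (Fin n) R} {p : Fin m}
    {q : Fin n} (hpq : (p : ℕ) = q) (hA : IsUpperTriangularUpTo q A) :
    ∃ σ : Equiv.Perm (Fin m), IsUpperTriangularUpTo q (σ.permMatrix R * A) ∧
      ∀ i : Fin m, (p : ℕ) < i → (σ.permMatrix R * A) p q ∣ (σ.permMatrix R * A) i q := by
  obtain ⟨i₀, hi₀, hmin⟩ :=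
    PreValuationRing.exists_dvd_forall_mem (Finset.nonempty_Ici (a := p)) (A · q)
  rw [Finset.mem_Ici] at hi₀
  have hswap (i : Fin m) : min (i : ℕ) p ≤ Equiv.swap p i₀ i :=
    Fin.le_def.mp (Equiv.min_le_swap_apply hi₀ i)
  refine ⟨Equiv.swap p i₀, fun i j hij hjq => ?_, fun i hi => ?_⟩ <;>
    simp only [PEquiv.toMatrix_toPEquiv_mul, submatrix_apply, id]
  · exact hA _ j (by grind) hjq
  · rw [Equiv.swap_apply_left]
    exact hmin _ (Finset.mem_Ici.mpr (by grind))

theorem IsUpperTriangularUpTo.exists_isUnit_mul_succ {A : Matrix (Fin m) (Fin n) R} {k : ℕ}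
    (hA : IsUpperTriangularUpTo k A) :
    ∃ U : Matrix (Fin m) (Fin m) R, IsUnit U ∧ IsUpperTriangularUpTo (k + 1) (U * A) := by
  by_cases hk : k < m ∧ k < n
  · let p : Fin m := ⟨k, hk.1⟩
    let q : Fin n := ⟨k, hk.2⟩
    obtain ⟨σ, hσA, hdvd⟩ := hA.exists_perm_dvd (p := p) (q := q) rfl
    obtain ⟨E, hE, hEσA⟩ := hσA.exists_isUnit_mul_succ_of_dvd (p := p) (q := q) rfl hdvd
    exact ⟨E * σ.permMatrix R, hE.mul (isUnit_permMatrix σ), by rwa [Matrix.mul_assoc]⟩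
  · refine ⟨1, isUnit_one, fun i j hij hjk => ?_⟩
    rw [Matrix.one_mul]
    exact hA i j hij (by omega)

theorem exists_isUnit_mul_isUpperTriangularUpTo (A : Matrix (Fin m) (Fin n) R) (k : ℕ) :
    ∃ U : Matrix (Fin m) (Fin m) R, IsUnit U ∧ IsUpperTriangularUpTo k (U * A) := by
  induction k with
  | zero => exact ⟨1, isUnit_one, isUpperTriangularUpTo_zero _⟩
  | succ k ih =>
    obtain ⟨U, hU, hUA⟩ := ih
    obtain ⟨V, hV, hVUA⟩ := hUA.exists_isUnit_mul_succ
    exact ⟨V * U, hV.mul hU, by rwa [Matrix.mul_assoc]⟩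

end PreValuationRing

end Matrix

theorem stmt14_general (R : Type*) [CommRing R] [IsDomain R] [ValuationRing R]
    (m n : ℕ)
    (A : Matrix (Fin m) (Fin n) R)
    (hA : (A.map (algebraMap R (FractionRing R))).rank = n) :
    ∃ U : Matrix (Fin m) (Fin m) R, IsUnit U ∧
      (∀ (i : Fin m) (j : Fin n), (j : ℕ) < (i : ℕ) → (U * A) i j = 0) ∧
      ((U * A).map (algebraMap R (FractionRing R))).rank = n := by
  obtain ⟨U, hU, hUA⟩ := exists_isUnit_mul_isUpperTriangularUpTo A n
  exact ⟨U, hU, fun i j hij => hUA i j hij j.isLt, (rank_map_mul_of_isUnit _ hU A).trans hA⟩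

/-- Let `R` be a valuation ring with fraction field `Frac(R)`, let `m ≥ n ≥ 1`, and let `A` be an
`m × n` matrix over `R` whose rank over `Frac(R)` equals `n`. Then there is an invertible matrix
`U ∈ GL_m(R)` such that `U * A` is upper-triangular (i.e. `(UA)_{ij} = 0` whenever `i > j`) and
`U * A` still has rank `n`. -/
theorem stmt14 (R : Type*) [CommRing R] [IsDomain R] [ValuationRing R]
    (m n : ℕ) (hn : 1 ≤ n) (hmn : n ≤ m)
    (A : Matrix (Fin m) (Fin n) R)
    (hA : (A.map (algebraMap R (FractionRing R))).rank = n) :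
    ∃ U : Matrix (Fin m) (Fin m) R, IsUnit U ∧
      (∀ (i : Fin m) (j : Fin n), (j : ℕ) < (i : ℕ) → (U * A) i j = 0) ∧
      ((U * A).map (algebraMap R (FractionRing R))).rank = n :=
  stmt14_general R m n A hA
end

section
/- Let S be a commutative o_L-algebra that is π-adically complete and separated. Call an S-linear functional λ : S⟦Z⟧ → S continuous if for every n ≥ 0 there exists m ≥ 0 such that λ maps the ideal (π, Z)^m of S⟦Z⟧ into π^n S. Then the map sending a π-adic null sequence (a_m)_{m≥0} in S (i.e. a_m → 0 π-adically) to the functional F ↦ Σ_{m≥0} a_m·(coefficient of Z^m in F) is well-defined (the series converges in S), and it is a bijection from the set of π-adic null sequences in S onto the set of continuous S-linear functionals on S⟦Z⟧. -/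
/-! The functional attached to a null sequence `a` is the `I`-adic limit of the finite sums
`∑_{m<K} a_m coeff_m F`, which are Cauchy because `a_m → 0`. It is continuous because every `F`
in `(I, X)^m` has `coeff_k F ∈ I^(m-k)`. Conversely a continuous functional `λ` is recovered from
the null sequence `λ(X^m)`, since `F - trunc_K F` lies in `X^K S⟦X⟧ ⊆ (I, X)^K`; the two
constructions are mutually inverse because `I`-adic limits are unique. -/

open PowerSeries Finset

namespace Ideal

variable {S : Type*} [CommRing S] (I : Ideal S)

def IsAdicLimit (u : ℕ → S) (l : S) : Prop :=
  ∀ n, ∃ N, ∀ k ≥ N, l - u k ∈ I ^ n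

def IsAdicCauchy (u : ℕ → S) : Prop :=
  ∀ n, ∃ N, ∀ k ≥ N, ∀ k' ≥ N, u k - u k' ∈ I ^ n

def IsAdicNull (a : ℕ → S) : Prop :=
  ∀ n, ∃ N, ∀ m ≥ N, a m ∈ I ^ n

variable {I} {u v : ℕ → S} {l l' : S}

theorem IsAdicLimit.unique [IsHausdorff I S] (h : I.IsAdicLimit u l) (h' : I.IsAdicLimit u l') :
    l = l' := by
  refine (IsHausdorff.eq_iff_smodEq (I := I)).2 fun n => ?_
  rw [SModEq.sub_mem, smul_eq_mul, mul_top]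
  obtain ⟨N, hN⟩ := h n
  obtain ⟨N', hN'⟩ := h' n
  have hsub := sub_mem (hN (max N N') (le_max_left _ _)) (hN' (max N N') (le_max_right _ _))
  rwa [sub_sub_sub_cancel_right] at hsub

theorem IsAdicCauchy.exists_isAdicLimit [IsPrecomplete I S] (hu : I.IsAdicCauchy u) :
    ∃ l, I.IsAdicLimit u l := by
  choose N hN using hu
  -- a monotone choice of thresholds makes `u ∘ M` an `I`-adically compatible sequence
  let M n := (range (n + 1)).sup N
  have hNM n : N n ≤ M n := le_sup (self_mem_range_succ n)
  have hM : Monotone M := fun m n hmn => sup_mono (range_subset_range.2 (by omega))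
  obtain ⟨l, hl⟩ := IsPrecomplete.prec (I := I) inferInstance (f := fun n => u (M n))
    fun {m n} hmn => by
      rw [SModEq.sub_mem, smul_eq_mul, mul_top]
      exact hN m _ (hNM m) _ ((hNM m).trans (hM hmn))
  refine ⟨l, fun n => ⟨M n, fun k hk => ?_⟩⟩
  have hl' : l - u (M n) ∈ I ^ n := by
    have := hl n
    rwa [SModEq.sub_mem, smul_eq_mul, mul_top, ← neg_mem_iff, neg_sub] at this
  simpa using add_mem hl' (hN n _ (hNM n) k ((hNM n).trans hk))

theorem IsAdicLimit.add (hu : I.IsAdicLimit u l) (hv : I.IsAdicLimit v l') :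
    I.IsAdicLimit (fun k => u k + v k) (l + l') := by
  intro n
  obtain ⟨N, hN⟩ := hu n
  obtain ⟨N', hN'⟩ := hv n
  refine ⟨max N N', fun k hk => ?_⟩
  rw [add_sub_add_comm]
  exact add_mem (hN k (le_of_max_le_left hk)) (hN' k (le_of_max_le_right hk))

theorem IsAdicLimit.const_mul (hu : I.IsAdicLimit u l) (c : S) :
    I.IsAdicLimit (fun k => c * u k) (c * l) := fun n =>
  (hu n).imp fun _ hN k hk => by rw [← mul_sub]; exact mul_mem_left _ _ (hN k hk)

theorem IsAdicLimit.of_eventually_eq {N : ℕ} (h : ∀ k ≥ N, u k = l) : I.IsAdicLimit u l :=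
  fun _ => ⟨N, fun k hk => by rw [h k hk, sub_self]; exact zero_mem _⟩

theorem IsAdicLimit.mem_pow {n : ℕ} (h : I.IsAdicLimit u l) (hu : ∀ k, u k ∈ I ^ n) :
    l ∈ I ^ n := by
  obtain ⟨N, hN⟩ := h n
  simpa using add_mem (hN N le_rfl) (hu N)

variable (I) [IsAdicComplete I S]

noncomputable def adicLimit (hu : I.IsAdicCauchy u) : S :=
  hu.exists_isAdicLimit.choose

theorem isAdicLimit_adicLimit (hu : I.IsAdicCauchy u) : I.IsAdicLimit u (I.adicLimit hu) :=
  hu.exists_isAdicLimit.choose_spec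

variable {M : Type*} [AddCommGroup M] [Module S M]

noncomputable def adicLimitLinearMap (f : ℕ → M →ₗ[S] S)
    (hf : ∀ x, I.IsAdicCauchy (f · x)) : M →ₗ[S] S where
  toFun x := I.adicLimit (hf x)
  map_add' x y := (I.isAdicLimit_adicLimit (hf (x + y))).unique <| by
    simpa only [map_add] using
      (I.isAdicLimit_adicLimit (hf x)).add (I.isAdicLimit_adicLimit (hf y))
  map_smul' c x := (I.isAdicLimit_adicLimit (hf (c • x))).unique <| by
    simpa only [map_smul, smul_eq_mul, RingHom.id_apply] using
      (I.isAdicLimit_adicLimit (hf x)).const_mul c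

theorem isAdicLimit_adicLimitLinearMap (f : ℕ → M →ₗ[S] S)
    (hf : ∀ x, I.IsAdicCauchy (f · x)) (x : M) :
    I.IsAdicLimit (f · x) (I.adicLimitLinearMap f hf x) :=
  I.isAdicLimit_adicLimit (hf x)

end Ideal

namespace PowerSeries

variable {S : Type*} [CommRing S] (I : Ideal S)

theorem coeff_mul_mem_pow_sub {F G : S⟦X⟧} {m m' : ℕ} (hF : ∀ k, coeff k F ∈ I ^ (m - k))
    (hG : ∀ k, coeff k G ∈ I ^ (m' - k)) (k : ℕ) : coeff k (F * G) ∈ I ^ (m + m' - k) := by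
  rw [coeff_mul]
  refine sum_mem fun ij hij => ?_
  rw [HasAntidiagonal.mem_antidiagonal] at hij
  have hmem := Ideal.mul_mem_mul (hF ij.1) (hG ij.2)
  rw [← pow_add] at hmem
  exact Ideal.pow_le_pow_right (by omega) hmem

def coeffFiltration (m : ℕ) : Ideal S⟦X⟧ where
  carrier := {F | ∀ k, coeff k F ∈ I ^ (m - k)}
  add_mem' hF hG k := by rw [map_add]; exact add_mem (hF k) (hG k)
  zero_mem' k := by simp
  smul_mem' c F hF k := by
    simpa using coeff_mul_mem_pow_sub I (m := 0) (G := F) (fun _ => by simp) hF k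

theorem map_C_sup_span_X_le_coeffFiltration_one :
    I.map C ⊔ Ideal.span {X} ≤ coeffFiltration I 1 := by
  refine sup_le (Ideal.map_le_iff_le_comap.2 fun a ha k => ?_)
    (Ideal.span_le.2 <| Set.singleton_subset_iff.2 fun k => ?_)
  · rcases k with _ | k <;> simp [coeff_C, ha]
  · rcases k with _ | _ | k <;> simp [coeff_X]

theorem pow_map_C_sup_span_X_le_coeffFiltration (m : ℕ) :
    (I.map C ⊔ Ideal.span {X}) ^ m ≤ coeffFiltration I m := by
  induction m with
  | zero => exact fun F _ k => by simp
  | succ m ih =>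
    rw [pow_succ]
    exact Ideal.mul_le.2 fun F hF G hG =>
      coeff_mul_mem_pow_sub I (ih hF) (map_C_sup_span_X_le_coeffFiltration_one I hG)

theorem X_pow_mul_mem_pow (K : ℕ) (G : S⟦X⟧) :
    X ^ K * G ∈ (I.map C ⊔ Ideal.span {X}) ^ K :=
  Ideal.mul_mem_right _ _ <|
    Ideal.pow_mem_pow (Ideal.mem_sup_right (Ideal.mem_span_singleton_self X)) K

def IsAdicContinuous (l : S⟦X⟧ →ₗ[S] S) : Prop :=
  ∀ n, ∃ m, ∀ F ∈ (I.map C ⊔ Ideal.span {X}) ^ m, l F ∈ I ^ n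

theorem isAdicNull_apply_X_pow {l : S⟦X⟧ →ₗ[S] S} (hl : IsAdicContinuous I l) :
    I.IsAdicNull (fun m => l (X ^ m)) := by
  intro n
  obtain ⟨m, hm⟩ := hl n
  refine ⟨m, fun k hk => hm _ ?_⟩
  rw [← Nat.add_sub_cancel' hk, pow_add]
  exact X_pow_mul_mem_pow I m _

noncomputable def partialPairing (a : ℕ → S) (K : ℕ) : S⟦X⟧ →ₗ[S] S :=
  ∑ m ∈ range K, a m • coeff m

theorem partialPairing_apply (a : ℕ → S) (K : ℕ) (F : S⟦X⟧) :
    partialPairing a K F = ∑ m ∈ range K, a m * coeff m F := by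
  simp [partialPairing]

theorem partialPairing_X_pow (a : ℕ → S) {K m : ℕ} (h : m < K) :
    partialPairing a K (X ^ m) = a m := by
  simp [partialPairing_apply, coeff_X_pow, h]

theorem partialPairing_apply_X_pow (l : S⟦X⟧ →ₗ[S] S) (K : ℕ) (F : S⟦X⟧) :
    partialPairing (fun m => l (X ^ m)) K F = l (trunc K F) := by
  rw [partialPairing_apply, trunc_apply, Nat.Ico_zero_eq_range,
    ← Polynomial.coeToPowerSeries.ringHom_apply, map_sum, map_sum]
  refine sum_congr rfl fun m _ => ?_
  rw [Polynomial.coeToPowerSeries.ringHom_apply, Polynomial.coe_monomial, monomial_eq_C_mul_X_pow,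
    ← smul_eq_C_mul, map_smul, smul_eq_mul, mul_comm]

variable {I} in
theorem isAdicCauchy_partialPairing {a : ℕ → S} (ha : I.IsAdicNull a) (F : S⟦X⟧) :
    I.IsAdicCauchy (partialPairing a · F) := by
  intro n
  obtain ⟨N, hN⟩ := ha n
  have hsub : ∀ k ≥ N, partialPairing a k F - partialPairing a N F ∈ I ^ n := fun k hk => by
    rw [partialPairing_apply, partialPairing_apply, ← sum_range_add_sum_Ico _ hk,
      add_sub_cancel_left]
    exact sum_mem fun m hm => Ideal.mul_mem_right _ _ (hN m (mem_Ico.1 hm).1)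
  exact ⟨N, fun k hk k' hk' => by simpa using sub_mem (hsub k hk) (hsub k' hk')⟩

variable [IsAdicComplete I S] {a : ℕ → S}

noncomputable def pairing (ha : I.IsAdicNull a) : S⟦X⟧ →ₗ[S] S :=
  I.adicLimitLinearMap (partialPairing a) (isAdicCauchy_partialPairing ha)

theorem isAdicLimit_pairing (ha : I.IsAdicNull a) (F : S⟦X⟧) :
    I.IsAdicLimit (partialPairing a · F) (pairing I ha F) :=
  I.isAdicLimit_adicLimitLinearMap _ _ F

theorem pairing_X_pow (ha : I.IsAdicNull a) (m : ℕ) : pairing I ha (X ^ m) = a m :=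
  (isAdicLimit_pairing I ha _).unique
    (Ideal.IsAdicLimit.of_eventually_eq fun _ hk => partialPairing_X_pow a hk)

theorem isAdicContinuous_pairing (ha : I.IsAdicNull a) : IsAdicContinuous I (pairing I ha) := by
  intro n
  obtain ⟨N, hN⟩ := ha n
  refine ⟨n + N, fun F hF => (isAdicLimit_pairing I ha F).mem_pow fun K => ?_⟩
  rw [partialPairing_apply]
  refine sum_mem fun m _ => ?_
  by_cases hm : N ≤ m
  · exact Ideal.mul_mem_right _ _ (hN m hm)
  · exact Ideal.mul_mem_left _ _ <| Ideal.pow_le_pow_right (by omega)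
      (pow_map_C_sup_span_X_le_coeffFiltration I _ hF m)

theorem pairing_apply_X_pow {l : S⟦X⟧ →ₗ[S] S} (hl : IsAdicContinuous I l) :
    pairing I (isAdicNull_apply_X_pow I hl) = l := by
  ext F
  refine (isAdicLimit_pairing I _ F).unique fun n => ?_
  obtain ⟨m, hm⟩ := hl n
  refine ⟨m, fun K hK => ?_⟩
  dsimp only
  rw [partialPairing_apply_X_pow, ← map_sub,
    sub_eq_iff_eq_add.2 (eq_X_pow_mul_shift_add_trunc K F)]
  exact hm _ (Ideal.pow_le_pow_right hK (X_pow_mul_mem_pow I K _))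

noncomputable def nullSequenceEquiv :
    {a : ℕ → S // I.IsAdicNull a} ≃ {l : S⟦X⟧ →ₗ[S] S // IsAdicContinuous I l} where
  toFun a := ⟨pairing I a.2, isAdicContinuous_pairing I a.2⟩
  invFun l := ⟨fun m => l.1 (X ^ m), isAdicNull_apply_X_pow I l.2⟩
  left_inv a := Subtype.ext <| funext <| pairing_X_pow I a.2
  right_inv l := Subtype.ext <| pairing_apply_X_pow I l.2

end PowerSeries

theorem stmt16_general (p : ℕ) [Fact p.Prime] (L : Type*) [Field L] [Algebra ℤ_[p] L]
    (π : L) (hπmem : π ∈ integralClosure ℤ_[p] L)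
    (S : Type*) [CommRing S] [Algebra (integralClosure ℤ_[p] L) S]
    [IsAdicComplete (Ideal.span
      {algebraMap (integralClosure ℤ_[p] L) S ⟨π, hπmem⟩}) S] :
    ∃ Φ : {a : ℕ → S // ∀ n : ℕ, ∃ N : ℕ, ∀ m ≥ N,
          a m ∈ (Ideal.span {algebraMap (integralClosure ℤ_[p] L) S ⟨π, hπmem⟩}) ^ n} →
        {l : PowerSeries S →ₗ[S] S // ∀ n : ℕ, ∃ m : ℕ,
          ∀ F ∈ (Ideal.span {PowerSeries.C
              (algebraMap (integralClosure ℤ_[p] L) S ⟨π, hπmem⟩),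
            (PowerSeries.X : PowerSeries S)}) ^ m,
          l F ∈ (Ideal.span {algebraMap (integralClosure ℤ_[p] L) S ⟨π, hπmem⟩}) ^ n},
      Function.Bijective Φ ∧
        ∀ a F (n : ℕ), ∃ N₀ : ℕ, ∀ N ≥ N₀,
          (Φ a).1 F - ∑ m ∈ Finset.range N, a.1 m * PowerSeries.coeff m F ∈
            (Ideal.span {algebraMap (integralClosure ℤ_[p] L) S ⟨π, hπmem⟩}) ^ n := by
  set I := Ideal.span {algebraMap (integralClosure ℤ_[p] L) S ⟨π, hπmem⟩}
  have hJ : Ideal.span {C (algebraMap (integralClosure ℤ_[p] L) S ⟨π, hπmem⟩), X} =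
      I.map C ⊔ Ideal.span {X} := by
    rw [Ideal.span_insert, Ideal.map_span, Set.image_singleton]
  rw [hJ]
  refine ⟨nullSequenceEquiv I, (nullSequenceEquiv I).bijective, fun a F => ?_⟩
  show I.IsAdicLimit (fun N => ∑ m ∈ range N, a.1 m * coeff m F) (pairing I a.2 F)
  simpa only [partialPairing_apply] using isAdicLimit_pairing I a.2 F

/-- Let `o_L` be the ring of integers of a finite extension `L/ℚ_p` with uniformizer `π`, and
let `S` be a commutative `o_L`-algebra, `π`-adically complete and separated.  Call an `S`-linear
functional `λ : S⟦Z⟧ → S` continuous if for every `n` there is `m` with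
`λ((π,Z)^m) ⊆ π^n S`.  Then the map sending a `π`-adic null sequence `(a_m)` in `S` to the
functional `F ↦ Σ_{m≥0} a_m·(coeff of Z^m in F)` (the series converging `π`-adically in `S`)
is well-defined and a bijection from the null sequences onto the continuous `S`-linear
functionals on `S⟦Z⟧`.  This is expressed below by the existence of a bijection `Φ` such that
`Φ(a)(F)` is the `π`-adic limit of the partial sums `Σ_{m<N} a_m·coeff_m(F)`. -/
theorem stmt16 (p : ℕ) [Fact p.Prime] (L : Type*) [Field L]
    [Algebra ℚ_[p] L] [FiniteDimensional ℚ_[p] L]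
    [Algebra ℤ_[p] L] [IsScalarTower ℤ_[p] ℚ_[p] L]
    (π : L) (hπmem : π ∈ integralClosure ℤ_[p] L)
    (hirr : Irreducible (⟨π, hπmem⟩ : integralClosure ℤ_[p] L))
    (S : Type*) [CommRing S] [Algebra (integralClosure ℤ_[p] L) S]
    [IsAdicComplete (Ideal.span
      {algebraMap (integralClosure ℤ_[p] L) S ⟨π, hπmem⟩}) S] :
    ∃ Φ : {a : ℕ → S // ∀ n : ℕ, ∃ N : ℕ, ∀ m ≥ N,
          a m ∈ (Ideal.span {algebraMap (integralClosure ℤ_[p] L) S ⟨π, hπmem⟩}) ^ n} →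
        {l : PowerSeries S →ₗ[S] S // ∀ n : ℕ, ∃ m : ℕ,
          ∀ F ∈ (Ideal.span {PowerSeries.C
              (algebraMap (integralClosure ℤ_[p] L) S ⟨π, hπmem⟩),
            (PowerSeries.X : PowerSeries S)}) ^ m,
          l F ∈ (Ideal.span {algebraMap (integralClosure ℤ_[p] L) S ⟨π, hπmem⟩}) ^ n},
      Function.Bijective Φ ∧
        ∀ a F (n : ℕ), ∃ N₀ : ℕ, ∀ N ≥ N₀,
          (Φ a).1 F - ∑ m ∈ Finset.range N, a.1 m * PowerSeries.coeff m F ∈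
            (Ideal.span {algebraMap (integralClosure ℤ_[p] L) S ⟨π, hπmem⟩}) ^ n :=
  stmt16_general p L π hπmem S
end

section
/- Let S be a commutative ring, π ∈ S, and let 𝔪 denote the ideal (π, Z) of A := S⟦Z⟧. Let g ∈ S⟦Z⟧ satisfy g ∈ Z·𝔪 (in particular g has zero constant term), and let φ : A → A be the substitution endomorphism F ↦ F(g). Then for every n ≥ 0 the n-fold iterate satisfies φ^n(Z) ∈ Z·𝔪^n, and consequently for any sequence (a_n)_{n≥0} of elements of Z·A one has φ^n(a_n) ∈ 𝔪^{n+1} for all n; in particular φ^n(a_n) → 0 in the 𝔪-adic topology on A. -/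
open PowerSeries

/-!
Write `𝔪 = (π, Z)`. The substitution `φ` maps `𝔪` into itself (it fixes `π` and sends `Z` to
`g ∈ 𝔪`) and maps `(Z)` into `(Z)·𝔪` (because `g ∈ Z·𝔪`). Iterating, `φⁿ` sends `(Z)` into
`(Z)·𝔪ⁿ ⊆ 𝔪ⁿ⁺¹`, which gives all three claims.
-/

theorem Ideal.iterate_mem_mul_pow_of_map_le {R : Type*} [CommSemiring R] (φ : R →+* R)
    {I J : Ideal R} (hJ : J.map φ ≤ J * I) (hI : I.map φ ≤ I) {x : R} (hx : x ∈ J) (n : ℕ) :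
    φ^[n] x ∈ J * I ^ n := by
  induction n with
  | zero => simpa using hx
  | succ n ih =>
    rw [Function.iterate_succ_apply']
    have hmap : (J * I ^ n).map φ ≤ J * I ^ (n + 1) :=
      calc (J * I ^ n).map φ = J.map φ * I.map φ ^ n := by rw [Ideal.map_mul, Ideal.map_pow]
        _ ≤ J * I * I ^ n := Ideal.mul_mono hJ (Ideal.pow_right_mono hI n)
        _ = J * I ^ (n + 1) := by ring
    exact hmap (Ideal.mem_map_of_mem φ ih)

/-- Let `S` be a commutative ring, `π ∈ S`, and let `𝔪` denote the ideal `(π, Z)` of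
`A := S⟦Z⟧`.  Let `g ∈ S⟦Z⟧` satisfy `g ∈ Z·𝔪`, and let `φ : A → A` be the substitution
endomorphism `F ↦ F(g)` (a ring endomorphism fixing constants and sending `Z` to `g`).
Then for every `n ≥ 0` the `n`-fold iterate satisfies `φ^n(Z) ∈ Z·𝔪^n`, and consequently
for any sequence `(a_n)` of elements of `Z·A` one has `φ^n(a_n) ∈ 𝔪^{n+1}` for all `n`;
in particular `φ^n(a_n) → 0` in the `𝔪`-adic topology on `A`. -/
theorem stmt17 (S : Type*) [CommRing S] (π : S) (g : PowerSeries S)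
    (hg : g ∈ Ideal.span {(PowerSeries.X : PowerSeries S)} *
      Ideal.span {PowerSeries.C π, PowerSeries.X})
    (φ : PowerSeries S →+* PowerSeries S)
    (hφX : φ PowerSeries.X = g)
    (hφC : ∀ s : S, φ (PowerSeries.C s) = PowerSeries.C s) :
    (∀ n : ℕ, (⇑φ)^[n] PowerSeries.X ∈ Ideal.span {(PowerSeries.X : PowerSeries S)} *
        (Ideal.span {PowerSeries.C π, PowerSeries.X}) ^ n) ∧
      (∀ a : ℕ → PowerSeries S, (∀ n, a n ∈ Ideal.span {(PowerSeries.X : PowerSeries S)}) →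
        ∀ n : ℕ, (⇑φ)^[n] (a n) ∈ (Ideal.span {PowerSeries.C π, PowerSeries.X}) ^ (n + 1)) ∧
      ∀ a : ℕ → PowerSeries S, (∀ n, a n ∈ Ideal.span {(PowerSeries.X : PowerSeries S)}) →
        ∀ k : ℕ, ∃ N : ℕ, ∀ n ≥ N,
          (⇑φ)^[n] (a n) ∈ (Ideal.span {PowerSeries.C π, PowerSeries.X}) ^ k := by
  set 𝔪 : Ideal (PowerSeries S) := Ideal.span {C π, X}
  have hX𝔪 : Ideal.span {X} ≤ 𝔪 :=
    (Ideal.span_singleton_le_iff_mem _).mpr (Ideal.subset_span (by simp))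
  have hg𝔪 : g ∈ 𝔪 := Ideal.mul_le_right hg
  have hmapX : (Ideal.span {X}).map φ ≤ Ideal.span {X} * 𝔪 := by
    rw [Ideal.map_span, Set.image_singleton, Ideal.span_singleton_le_iff_mem, hφX]
    exact hg
  have hmap𝔪 : 𝔪.map φ ≤ 𝔪 := by
    rw [Ideal.map_span, Ideal.span_le, Set.image_pair, hφC, hφX, Set.pair_subset_iff]
    exact ⟨Ideal.subset_span (by simp), hg𝔪⟩
  have hZ𝔪 : ∀ a ∈ Ideal.span {X}, ∀ n, φ^[n] a ∈ Ideal.span {X} * 𝔪 ^ n := fun _ ha =>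
    Ideal.iterate_mem_mul_pow_of_map_le φ hmapX hmap𝔪 ha
  have h𝔪 : ∀ a ∈ Ideal.span {X}, ∀ n, φ^[n] a ∈ 𝔪 ^ (n + 1) := fun a ha n => by
    rw [pow_succ']
    exact Ideal.mul_mono_left hX𝔪 (hZ𝔪 a ha n)
  exact ⟨hZ𝔪 X (Ideal.mem_span_singleton_self X), fun a ha n => h𝔪 _ (ha n) n,
    fun a ha k => ⟨k, fun n hn => Ideal.pow_le_pow_right (by omega) (h𝔪 _ (ha n) n)⟩⟩
end
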